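/- arXiv:1904.09547 — 9 statements merged into one kernel-verified Lean document; each statement's English description precedes it below -/
import Mathlib

section
/- Let H be a separable Hilbert space, U : H → H an isometry, and A ⊆ ℕ an infinite set such that for every f ∈ H the set {U^n f : n ∈ A} is pre-compact (totally bounded) in H. Then there exists a strictly increasing sequence (t_k) of natural numbers such that U^{t_k} f → f in norm for every f ∈ H. -/
open MeasureTheory Filter Topology

private lemma iso_iter {H : Type*} [PseudoMetricSpace H] {U : H → H} (hU : Isometry U) :
    ∀ n : ℕ, Isometry (U^[n])
  | 0 => by rw [Function.iterate_zero]; exact isometry_id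
  | (n + 1) => by rw [Function.iterate_succ']; exact hU.comp (iso_iter hU n)

theorem stmt1 {H : Type*} [NormedAddCommGroup H] [InnerProductSpace ℝ H]
    [CompleteSpace H] [TopologicalSpace.SeparableSpace H]
    (U : H → H) (hU : Isometry U) (hlin : IsLinearMap ℝ U)
    (A : Set ℕ) (hA : A.Infinite)
    (hpc : ∀ f : H, TotallyBounded {g : H | ∃ n ∈ A, g = U^[n] f}) :
    ∃ t : ℕ → ℕ, StrictMono t ∧
      ∀ f : H, Tendsto (fun k => U^[t k] f) atTop (𝓝 f) := by
  have hIso : ∀ n : ℕ, Isometry (U^[n]) := iso_iter hU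
  obtain ⟨f, hf⟩ := TopologicalSpace.exists_dense_seq H
  set p : ℕ → Prop := fun n => n ∈ A with hp
  have hpinf : (setOf p).Infinite := hA
  have ha_mono : StrictMono (Nat.nth p) := Nat.nth_strictMono hpinf
  have ha_mem : ∀ k, Nat.nth p k ∈ A := fun k => Nat.nth_mem_of_infinite hpinf k
  set a : ℕ → ℕ := Nat.nth p with ha
  set S : ℕ → Set H := fun i => closure {g : H | ∃ n ∈ A, g = U^[n] (f i)} with hS
  have hcomp : ∀ i : ℕ, IsCompact (S i) := fun i =>
    TotallyBounded.isCompact_of_isClosed ((hpc (f i)).closure) isClosed_closure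
  have hmem : ∀ k : ℕ, (fun i => U^[a k] (f i)) ∈ Set.pi Set.univ S := by
    intro k i _
    exact subset_closure ⟨a k, ha_mem k, rfl⟩
  obtain ⟨L, -, φ, hφ, hconv⟩ := (isCompact_univ_pi hcomp).tendsto_subseq hmem
  set b : ℕ → ℕ := fun k => a (φ k) with hb
  have hbmono : StrictMono b := ha_mono.comp hφ
  have hcoord : ∀ i, CauchySeq (fun k => U^[b k] (f i)) := by
    intro i
    have h1 : Tendsto (fun k => U^[b k] (f i)) atTop (𝓝 (L i)) := by
      have := (tendsto_pi_nhds.mp hconv) i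
      exact this
    exact h1.cauchySeq
  -- Cauchy for every vector, via density
  have hC : ∀ g : H, CauchySeq (fun k => U^[b k] g) := by
    intro g
    rw [Metric.cauchySeq_iff]
    intro ε hε
    obtain ⟨i, hi⟩ := hf.exists_dist_lt g (by positivity : (0:ℝ) < ε / 3)
    obtain ⟨N, hN⟩ := Metric.cauchySeq_iff.mp (hcoord i) (ε / 3) (by positivity)
    refine ⟨N, fun m hm n hn => ?_⟩
    calc dist (U^[b m] g) (U^[b n] g)
        ≤ dist (U^[b m] g) (U^[b m] (f i)) + dist (U^[b m] (f i)) (U^[b n] (f i))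
            + dist (U^[b n] (f i)) (U^[b n] g) := dist_triangle4 _ _ _ _
      _ = dist g (f i) + dist (U^[b m] (f i)) (U^[b n] (f i)) + dist (f i) g := by
            rw [(hIso (b m)).dist_eq, (hIso (b n)).dist_eq]
      _ < ε / 3 + ε / 3 + ε / 3 := by
            have h1 := hN m hm n hn
            have h2 : dist g (f i) < ε / 3 := hi
            have h3 : dist (f i) g < ε / 3 := by rw [dist_comm]; exact hi
            linarith
      _ = ε := by ring
  have hble : ∀ k, k ≤ b k := fun k => hbmono.le_apply
  -- construct the index sequence σ
  let σ : ℕ → ℕ := fun k => Nat.rec 1 (fun k ih => b ih + b (k + 1) + 1) k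
  have hσ0 : σ 0 = 1 := rfl
  have hσs : ∀ k, σ (k + 1) = b (σ k) + b (k + 1) + 1 := fun k => rfl
  have hσgt : ∀ k, k < σ k := by
    intro k
    cases k with
    | zero => simp [hσ0]
    | succ k =>
        rw [hσs]
        have := hble (k + 1)
        omega
  set t : ℕ → ℕ := fun k => b (σ k) - b k with ht
  have hbσ : ∀ k, b k < b (σ k) := fun k => hbmono (hσgt k)
  have htadd : ∀ k, b k + t k = b (σ k) := by
    intro k
    have := hbσ k
    simp only [ht]
    omega
  refine ⟨t, ?_, ?_⟩
  · apply strictMono_nat_of_lt_succ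
    intro k
    have h1 : σ (k + 1) ≤ b (σ (k + 1)) := hble _
    have h4 := hσs k
    have h2 := hbσ k
    have h3 := hbσ (k + 1)
    simp only [ht]
    omega
  · intro g
    rw [Metric.tendsto_atTop]
    intro ε hε
    obtain ⟨N, hN⟩ := Metric.cauchySeq_iff.mp (hC g) ε hε
    refine ⟨N, fun k hk => ?_⟩
    have key : U^[b k] (U^[t k] g) = U^[b (σ k)] g := by
      rw [← Function.iterate_add_apply, htadd k]
    calc dist (U^[t k] g) g = dist (U^[b k] (U^[t k] g)) (U^[b k] g) :=
            ((hIso (b k)).dist_eq _ _).symm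
      _ = dist (U^[b (σ k)] g) (U^[b k] g) := by rw [key]
      _ < ε := hN _ (hk.trans (hσgt k).le) _ hk
end

section
/- Let H be a Hilbert space, U : H → H an isometry, f ∈ H, and A = {a_i : i ∈ ℕ} a strictly increasing sequence of naturals. If {U^{a_n} f : n ∈ ℕ} is pre-compact in H, then there exists a strictly increasing sequence (n_k) of naturals with U^{n_k} f → f in norm, i.e. f is rigid. -/
open Filter Topology

/-!
Total boundedness puts infinitely many points `U^[a n] f` within `ε` of a single one,
`U^[a m] f`, with `a n - a m` as large as we like. Since `U^[a m]` is an isometry,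
`‖U^[a n - a m] f - f‖ = ‖U^[a n] f - U^[a m] f‖ < ε`, so `f` is a cluster point of its orbit,
and in a metric space a cluster point of a sequence is the limit of a subsequence.
-/

theorem TotallyBounded.exists_frequently_dist_lt {X ι : Type*} [PseudoMetricSpace X]
    {l : Filter ι} [l.NeBot] {u : ι → X} (hu : TotallyBounded (Set.range u)) {ε : ℝ}
    (hε : 0 < ε) : ∃ i, ∃ᶠ j in l, dist (u j) (u i) < ε := by
  obtain ⟨t, ht, hcover⟩ := Metric.totallyBounded_iff.1 hu (ε / 2) (half_pos hε)
  have hnear : ∃ᶠ j in l, ∃ y ∈ t, dist (u j) y < ε / 2 :=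
    (Eventually.of_forall fun j => by
      simpa using hcover (Set.mem_range_self j)).frequently
  obtain ⟨y, -, hy⟩ := ht.frequently_exists.1 hnear
  obtain ⟨i, hi⟩ := hy.exists
  refine ⟨i, hy.mono fun j hj => ?_⟩
  calc dist (u j) (u i) ≤ dist (u j) y + dist (u i) y := dist_triangle_right _ _ _
    _ < ε / 2 + ε / 2 := add_lt_add hj hi
    _ = ε := add_halves ε

theorem Isometry.iterate {X : Type*} [PseudoEMetricSpace X] {U : X → X} (hU : Isometry U) :
    ∀ n : ℕ, Isometry U^[n]
  | 0 => isometry_id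
  | n + 1 => (hU.iterate n).comp hU

theorem Isometry.dist_iterate_add_iterate {X : Type*} [PseudoMetricSpace X] {U : X → X}
    (hU : Isometry U) (x : X) (m k : ℕ) : dist (U^[m + k] x) (U^[m] x) = dist (U^[k] x) x := by
  rw [Function.iterate_add_apply, (hU.iterate m).dist_eq]

theorem Isometry.mapClusterPt_iterate_of_totallyBounded {X : Type*} [PseudoMetricSpace X]
    {U : X → X} (hU : Isometry U) {x : X} {a : ℕ → ℕ} (ha : Tendsto a atTop atTop)
    (hpc : TotallyBounded (Set.range fun n => U^[a n] x)) :
    MapClusterPt x atTop fun n => U^[n] x := by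
  refine Metric.nhds_basis_ball.mapClusterPt_iff_frequently.2 fun ε hε => ?_
  obtain ⟨m, hm⟩ := hpc.exists_frequently_dist_lt (l := atTop) hε
  refine frequently_atTop.2 fun N => ?_
  obtain ⟨n, hclose, hn⟩ := (hm.and_eventually (ha.eventually_ge_atTop (a m + N))).exists
  refine ⟨a n - a m, by omega, ?_⟩
  rw [Metric.mem_ball, ← hU.dist_iterate_add_iterate x (a m), Nat.add_sub_cancel' (by omega)]
  exact hclose

theorem stmt2_general {H : Type*} [NormedAddCommGroup H]
    (U : H → H) (hU : Isometry U)
    (f : H) (a : ℕ → ℕ) (ha : StrictMono a)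
    (hpc : TotallyBounded {g : H | ∃ n : ℕ, g = U^[a n] f}) :
    ∃ t : ℕ → ℕ, StrictMono t ∧ Tendsto (fun k => U^[t k] f) atTop (𝓝 f) := by
  have horbit : {g : H | ∃ n : ℕ, g = U^[a n] f} = Set.range fun n => U^[a n] f := by
    ext g
    simp [eq_comm]
  rw [horbit] at hpc
  exact (hU.mapClusterPt_iterate_of_totallyBounded ha.tendsto_atTop hpc).tendsto_subseq

theorem stmt2 {H : Type*} [NormedAddCommGroup H] [InnerProductSpace ℝ H]
    [CompleteSpace H]
    (U : H → H) (hU : Isometry U) (hlin : IsLinearMap ℝ U)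
    (f : H) (a : ℕ → ℕ) (ha : StrictMono a)
    (hpc : TotallyBounded {g : H | ∃ n : ℕ, g = U^[a n] f}) :
    ∃ t : ℕ → ℕ, StrictMono t ∧ Tendsto (fun k => U^[t k] f) atTop (𝓝 f) :=
  stmt2_general U hU f a ha hpc
end

section
/- Let (X,d) be a compact metric space and T : X → X a homeomorphism. If there exists an infinite subset A ⊆ ℕ such that the family {T^a : a ∈ A} is uniformly equicontinuous on X, then (X,T) is uniformly rigid: there exists a strictly increasing sequence (n_k) of naturals such that T^{n_k} → id uniformly on X. -/
open MeasureTheory Filter Topology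

private lemma key3 {X : Type*} [MetricSpace X] [CompactSpace X] (T : X ≃ₜ X)
    (A : Set ℕ) (hA : A.Infinite)
    (hec : ∀ ε > 0, ∃ δ > 0, ∀ x y : X, dist x y < δ →
      ∀ a ∈ A, dist ((⇑T)^[a] x) ((⇑T)^[a] y) < ε) :
    ∀ ε > 0, ∀ N : ℕ, ∃ n ≥ N, (⨆ x : X, dist ((⇑T)^[n] x) x) ≤ ε := by
  intro ε hε N
  obtain ⟨δ, hδ, hδ'⟩ := hec (ε/4) (by positivity)
  obtain ⟨t, ht, htc⟩ := Metric.totallyBounded_iff.mp (isCompact_univ : IsCompact (Set.univ : Set X)).totallyBounded δ hδ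
  obtain ⟨s, hs, hsc⟩ := Metric.totallyBounded_iff.mp (isCompact_univ : IsCompact (Set.univ : Set X)).totallyBounded (ε/4)
    (by positivity)
  haveI := ht.to_subtype
  haveI := hs.to_subtype
  haveI := hA.to_subtype
  have hpt : ∀ (a : ℕ) (c : ↥t), ∃ y : ↥s, dist ((⇑T)^[a] (c : X)) (y : X) < ε/4 := by
    intro a c
    have := hsc (Set.mem_univ ((⇑T)^[a] (c : X)))
    simp only [Set.mem_iUnion, Metric.mem_ball] at this
    obtain ⟨y, hy, hyd⟩ := this
    exact ⟨⟨y, hy⟩, hyd⟩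
  choose g hg using hpt
  obtain ⟨p, hp⟩ := Finite.exists_infinite_fiber (fun a : ↥A => g a)
  have hSinf : {m | m ∈ A ∧ g m = p}.Infinite := by
    have hmt : Set.MapsTo (fun a : ↥A => (a : ℕ))
        ((fun a : ↥A => g a) ⁻¹' {p}) {m | m ∈ A ∧ g m = p} := by
      rintro ⟨a, ha⟩ hpa
      exact ⟨ha, hpa⟩
    have hinj : Set.InjOn (fun a : ↥A => (a : ℕ)) ((fun a : ↥A => g a) ⁻¹' {p}) :=
      fun x _ y _ h => Subtype.ext h
    exact Set.infinite_of_injOn_mapsTo hinj hmt (Set.infinite_coe_iff.mp hp)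
  obtain ⟨a, ha⟩ := hSinf.nonempty
  obtain ⟨b, hb, hab⟩ := hSinf.exists_gt (a + N)
  refine ⟨b - a, by omega, ?_⟩
  have hclose : ∀ x : X, dist ((⇑T)^[a] x) ((⇑T)^[b] x) < ε := by
    intro x
    have := htc (Set.mem_univ x)
    simp only [Set.mem_iUnion, Metric.mem_ball] at this
    obtain ⟨c, hc, hcd⟩ := this
    have h1 : dist ((⇑T)^[a] x) ((⇑T)^[a] (⟨c, hc⟩ : ↥t)) < ε/4 := hδ' x c hcd a ha.1
    have h4 : dist ((⇑T)^[b] x) ((⇑T)^[b] (⟨c, hc⟩ : ↥t)) < ε/4 := hδ' x c hcd b hb.1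
    have h2 : dist ((⇑T)^[a] ((⟨c, hc⟩ : ↥t) : X)) ((g a ⟨c, hc⟩ : X)) < ε/4 := hg a _
    have h3 : dist ((⇑T)^[b] ((⟨c, hc⟩ : ↥t) : X)) ((g b ⟨c, hc⟩ : X)) < ε/4 := hg b _
    have hgab : g a ⟨c, hc⟩ = g b ⟨c, hc⟩ := by rw [ha.2, hb.2]
    have hmid : dist ((⇑T)^[a] ((⟨c, hc⟩ : ↥t) : X)) ((⇑T)^[b] ((⟨c, hc⟩ : ↥t) : X))
        < ε/4 + ε/4 := by
      refine lt_of_le_of_lt (dist_triangle _ ((g a ⟨c, hc⟩ : X)) _) (add_lt_add h2 ?_)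
      rw [hgab, dist_comm]; exact h3
    have htri := dist_triangle4 ((⇑T)^[a] x) ((⇑T)^[a] ((⟨c, hc⟩ : ↥t) : X))
      ((⇑T)^[b] ((⟨c, hc⟩ : ↥t) : X)) ((⇑T)^[b] x)
    rw [dist_comm ((⇑T)^[b] ((⟨c, hc⟩ : ↥t) : X)) ((⇑T)^[b] x)] at htri
    linarith
  refine Real.iSup_le (fun y => ?_) hε.le
  set x := (⇑T.symm)^[a] y with hx
  have hli : Function.LeftInverse ⇑T ⇑T.symm := T.apply_symm_apply
  have hax : (⇑T)^[a] x = y := hli.iterate a y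
  have hbx : (⇑T)^[b] x = (⇑T)^[b - a] y := by
    conv_lhs => rw [show b = (b - a) + a by omega]
    rw [Function.iterate_add_apply, hax]
  have := hclose x
  rw [hax, hbx, dist_comm] at this
  exact this.le


theorem stmt3 {X : Type*} [MetricSpace X] [CompactSpace X] (T : X ≃ₜ X)
    (A : Set ℕ) (hA : A.Infinite)
    (hec : ∀ ε > 0, ∃ δ > 0, ∀ x y : X, dist x y < δ →
      ∀ a ∈ A, dist ((⇑T)^[a] x) ((⇑T)^[a] y) < ε) :
    ∃ n : ℕ → ℕ, StrictMono n ∧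
      Tendsto (fun k => ⨆ x : X, dist ((⇑T)^[n k] x) x) atTop (𝓝 0) := by
  have key := key3 T A hA hec
  have key' : ∀ (k N : ℕ), ∃ n ≥ N, (⨆ x : X, dist ((⇑T)^[n] x) x) ≤ 1/(k+1 : ℝ) := by
    intro k N
    exact key (1/(k+1 : ℝ)) (by positivity) N
  choose F hF1 hF2 using key'
  set n : ℕ → ℕ := fun k => Nat.rec (F 0 0) (fun k nk => F (k+1) (nk+1)) k with hn
  have hmono : StrictMono n := by
    apply strictMono_nat_of_lt_succ
    intro k
    have : n (k+1) = F (k+1) (n k + 1) := rfl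
    rw [this]
    have := hF1 (k+1) (n k + 1)
    omega
  refine ⟨n, hmono, ?_⟩
  have hbound : ∀ k, (⨆ x : X, dist ((⇑T)^[n k] x) x) ≤ 1/(k+1 : ℝ) := by
    intro k
    cases k with
    | zero => exact hF2 0 0
    | succ m => exact hF2 (m+1) (n m + 1)
  apply squeeze_zero (fun k => Real.iSup_nonneg (fun x => dist_nonneg)) hbound
  exact tendsto_one_div_add_atTop_nhds_zero_nat
end

section
/- Let (X,T) be a topological dynamical system, μ a T-invariant Borel probability measure, f ∈ L²(μ), and A = {a_i} a strictly increasing sequence of naturals such that f∘T^{a_n} → f μ-almost everywhere. Then for every τ > 0 and ε > 0 there exist a compact set K ⊆ X with μ(K) > 1 − τ and δ > 0 such that for all x,y ∈ K with d(x,y) < δ one has |f(T^{a_n} x) − f(T^{a_n} y)| < ε for all n ∈ ℕ. -/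
/-!
Each `f ∘ T^[a n]` lies in `L²(μ)` because `T` preserves `μ`. Lusin's theorem (from the density
of bounded continuous functions in `Lᵖ`, an a.e. convergent subsequence and Egorov's theorem),
applied to all of them with summable error budgets, gives a closed set of large measure on which
every `f ∘ T^[a n]` is continuous; Egorov's theorem gives another one on which they converge
uniformly to `f`. On the compact intersection the first finitely many functions are uniformly
equicontinuous, and the remaining ones are uniformly close to the uniformly continuous limit.
-/

open MeasureTheory Filter Topology
open scoped ENNReal

theorem IsCompact.exists_forall_dist_lt_of_tendstoUniformlyOn {X β : Type*}
    [PseudoMetricSpace X] [PseudoMetricSpace β] {K : Set X} (hK : IsCompact K)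
    {F : ℕ → X → β} {G : X → β} (hF : ∀ n, ContinuousOn (F n) K)
    (hFG : TendstoUniformlyOn F G atTop K) {ε : ℝ} (hε : 0 < ε) :
    ∃ δ > 0, ∀ x ∈ K, ∀ y ∈ K, dist x y < δ → ∀ n, dist (F n x) (F n y) < ε := by
  obtain ⟨N, hN⟩ :=
    (Metric.tendstoUniformlyOn_iff.1 hFG (ε / 3) (by positivity)).exists_forall_of_atTop
  have hG : ContinuousOn G K := hFG.continuousOn (Eventually.of_forall hF).frequently
  obtain ⟨δ₁, hδ₁, hGδ⟩ := Metric.uniformContinuousOn_iff.1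
    (hK.uniformContinuousOn_of_continuous hG) (ε / 3) (by positivity)
  have hinit : UniformContinuousOn (fun x (i : Fin N) => F i x) K :=
    hK.uniformContinuousOn_of_continuous (continuousOn_pi.2 fun i => hF i)
  obtain ⟨δ₂, hδ₂, hinitδ⟩ := Metric.uniformContinuousOn_iff.1 hinit ε hε
  refine ⟨min δ₁ δ₂, lt_min hδ₁ hδ₂, fun x hx y hy hxy n => ?_⟩
  rcases lt_or_ge n N with hn | hn
  · calc dist (F n x) (F n y) ≤ dist (fun i : Fin N => F i x) (fun i => F i y) :=
          dist_le_pi_dist (fun i : Fin N => F i x) (fun i => F i y) ⟨n, hn⟩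
      _ < ε := hinitδ x hx y hy (hxy.trans_le (min_le_right _ _))
  · calc dist (F n x) (F n y) ≤ dist (F n x) (G x) + dist (G x) (G y) + dist (G y) (F n y) :=
          dist_triangle4 _ _ _ _
      _ < ε / 3 + ε / 3 + ε / 3 := by
        gcongr
        · exact dist_comm (G x) _ ▸ hN n hn x hx
        · exact hGδ x hx y hy (hxy.trans_le (min_le_left _ _))
        · exact hN n hn y hy
      _ = ε := by ring

namespace MeasureTheory

section

variable {X : Type*} [TopologicalSpace X] [MeasurableSpace X]
  {μ : Measure X} [IsFiniteMeasure μ] [μ.WeaklyRegular]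

theorem NullMeasurableSet.exists_isClosed_subset_measure_compl_le [OpensMeasurableSpace X]
    {s : Set X} (hs : NullMeasurableSet s μ) {η : ℝ} (hη : 0 < η) :
    ∃ K ⊆ s, IsClosed K ∧ μ Kᶜ ≤ μ sᶜ + ENNReal.ofReal η := by
  obtain ⟨t, hts, ht, hts_ae⟩ := hs.exists_measurable_subset_ae_eq
  obtain ⟨K, hKt, hK, hKμ⟩ :=
    ht.exists_isClosed_sdiff_lt (measure_ne_top μ t) (ENNReal.ofReal_pos.2 hη).ne'
  refine ⟨K, hKt.trans hts, hK, ?_⟩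
  calc μ Kᶜ ≤ μ (tᶜ ∪ t \ K) := measure_mono fun x hx => by by_cases x ∈ t <;> simp_all
    _ ≤ μ tᶜ + μ (t \ K) := measure_union_le _ _
    _ ≤ μ sᶜ + ENNReal.ofReal η := by
      rw [measure_congr hts_ae.compl]
      gcongr

theorem exists_isClosed_measure_compl_le_tendstoUniformlyOn [OpensMeasurableSpace X]
    {β : Type*} [MetricSpace β] {F : ℕ → X → β} {G : X → β}
    (hF : ∀ n, AEStronglyMeasurable (F n) μ) (hFG : ∀ᵐ x ∂μ, Tendsto (F · x) atTop (𝓝 (G x)))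
    {η : ℝ} (hη : 0 < η) :
    ∃ K, IsClosed K ∧ μ Kᶜ ≤ ENNReal.ofReal η ∧ TendstoUniformlyOn F G atTop K := by
  have hG : AEStronglyMeasurable G μ := aestronglyMeasurable_of_tendsto_ae atTop hF hFG
  set S := {x | (∀ n, F n x = (hF n).mk (F n) x) ∧ G x = hG.mk G x}
  have hS : μ Sᶜ = 0 := ae_iff.1 ((ae_all_iff.2 fun n => (hF n).ae_eq_mk).and hG.ae_eq_mk)
  obtain ⟨t, ht, htμ, hunif⟩ := tendstoUniformlyOn_of_ae_tendsto'
    (fun n => (hF n).stronglyMeasurable_mk) hG.stronglyMeasurable_mk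
    (by filter_upwards [hFG, measure_eq_zero_iff_ae_notMem.1 hS] with x hx hxS
        simp only [Set.mem_compl_iff, not_not] at hxS
        simpa only [← hxS.1, ← hxS.2] using hx) (half_pos hη)
  have hs : NullMeasurableSet (tᶜ ∩ S) μ :=
    ht.compl.nullMeasurableSet.inter (NullMeasurableSet.of_null hS).of_compl
  obtain ⟨K, hKs, hK, hKμ⟩ := hs.exists_isClosed_subset_measure_compl_le (half_pos hη)
  refine ⟨K, hK, ?_, ?_⟩
  · calc μ Kᶜ ≤ μ (tᶜ ∩ S)ᶜ + ENNReal.ofReal (η / 2) := hKμ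
      _ ≤ μ t + μ Sᶜ + ENNReal.ofReal (η / 2) := by
        rw [Set.compl_inter, compl_compl]; gcongr; exact measure_union_le _ _
      _ ≤ ENNReal.ofReal (η / 2) + ENNReal.ofReal (η / 2) := by rw [hS, add_zero]; gcongr
      _ = ENNReal.ofReal η := by
        rw [← ENNReal.ofReal_add (by positivity) (by positivity), add_halves]
  · refine ((hunif.mono fun x hx => (hKs hx).1).congr_right fun x hx => (hKs hx).2.2.symm).congr
      (Eventually.of_forall fun n x hx => ((hKs hx).2.1 n).symm)

variable [NormalSpace X] [BorelSpace X] {E : Type*} [NormedAddCommGroup E] [NormedSpace ℝ E]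
  {p : ℝ≥0∞}

theorem MemLp.exists_isClosed_measure_compl_le_continuousOn {g : X → E} (hg : MemLp g p μ)
    (hp0 : p ≠ 0) (hp : p ≠ ⊤) {η : ℝ} (hη : 0 < η) :
    ∃ K, IsClosed K ∧ μ Kᶜ ≤ ENNReal.ofReal η ∧ ContinuousOn g K := by
  choose φ hφ hφLp using fun k : ℕ => hg.exists_boundedContinuous_eLpNorm_sub_le hp
    (ENNReal.inv_ne_zero.2 (ENNReal.natCast_ne_top k))
  have hφg : TendstoInMeasure μ (fun k => ⇑(φ k)) atTop g := by
    refine tendstoInMeasure_of_tendsto_eLpNorm hp0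
      (fun k => (hφLp k).aestronglyMeasurable) hg.aestronglyMeasurable ?_
    refine tendsto_of_tendsto_of_tendsto_of_le_of_le tendsto_const_nhds
      ENNReal.tendsto_inv_nat_nhds_zero (fun k => zero_le) fun k => ?_
    rw [eLpNorm_sub_comm]
    exact hφ k
  obtain ⟨ns, -, hns⟩ := hφg.exists_seq_tendsto_ae
  obtain ⟨K, hK, hKμ, hunif⟩ := exists_isClosed_measure_compl_le_tendstoUniformlyOn
    (fun i => (hφLp (ns i)).aestronglyMeasurable) hns hη
  exact ⟨K, hK, hKμ, hunif.continuousOn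
    (Eventually.of_forall fun i => (φ (ns i)).continuous.continuousOn).frequently⟩

theorem exists_isClosed_measure_compl_le_forall_continuousOn {F : ℕ → X → E}
    (hF : ∀ n, MemLp (F n) p μ) (hp0 : p ≠ 0) (hp : p ≠ ⊤) {η : ℝ} (hη : 0 < η) :
    ∃ K, IsClosed K ∧ μ Kᶜ ≤ ENNReal.ofReal η ∧ ∀ n, ContinuousOn (F n) K := by
  obtain ⟨η', hη'0, hη'⟩ := ENNReal.exists_pos_sum_of_countable (ENNReal.ofReal_pos.2 hη).ne' ℕ
  choose K hK hKμ hFK using fun n =>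
    (hF n).exists_isClosed_measure_compl_le_continuousOn hp0 hp (NNReal.coe_pos.2 (hη'0 n))
  refine ⟨⋂ n, K n, isClosed_iInter hK, ?_, fun n => (hFK n).mono (Set.iInter_subset K n)⟩
  calc μ (⋂ n, K n)ᶜ = μ (⋃ n, (K n)ᶜ) := by rw [Set.compl_iInter]
    _ ≤ ∑' n, μ (K n)ᶜ := measure_iUnion_le _
    _ ≤ ∑' n, (η' n : ℝ≥0∞) :=
      ENNReal.tsum_le_tsum fun n => (hKμ n).trans_eq ENNReal.ofReal_coe_nnreal
    _ ≤ ENNReal.ofReal η := hη'.le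

end

theorem exists_isCompact_measure_compl_le_forall_dist_lt_of_ae_tendsto {X E : Type*}
    [PseudoMetricSpace X] [CompactSpace X] [MeasurableSpace X] [BorelSpace X]
    {μ : Measure X} [IsFiniteMeasure μ] [NormedAddCommGroup E] [NormedSpace ℝ E]
    {p : ℝ≥0∞} {F : ℕ → X → E} {G : X → E} (hF : ∀ n, MemLp (F n) p μ) (hp0 : p ≠ 0)
    (hp : p ≠ ⊤) (hFG : ∀ᵐ x ∂μ, Tendsto (F · x) atTop (𝓝 (G x))) {η : ℝ} (hη : 0 < η) :
    ∃ K, IsCompact K ∧ μ Kᶜ ≤ ENNReal.ofReal η ∧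
      ∀ ε > 0, ∃ δ > 0, ∀ x ∈ K, ∀ y ∈ K, dist x y < δ → ∀ n, dist (F n x) (F n y) < ε := by
  obtain ⟨K₁, hK₁, hK₁μ, hFK₁⟩ :=
    exists_isClosed_measure_compl_le_forall_continuousOn hF hp0 hp (half_pos hη)
  obtain ⟨K₂, hK₂, hK₂μ, hFGK₂⟩ := exists_isClosed_measure_compl_le_tendstoUniformlyOn
    (fun n => (hF n).aestronglyMeasurable) hFG (half_pos hη)
  have hK : IsCompact (K₁ ∩ K₂) := (hK₁.inter hK₂).isCompact
  refine ⟨K₁ ∩ K₂, hK, ?_, fun ε hε => hK.exists_forall_dist_lt_of_tendstoUniformlyOn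
    (fun n => (hFK₁ n).mono Set.inter_subset_left) (hFGK₂.mono Set.inter_subset_right) hε⟩
  calc μ (K₁ ∩ K₂)ᶜ ≤ μ K₁ᶜ + μ K₂ᶜ := by rw [Set.compl_inter]; exact measure_union_le _ _
    _ ≤ ENNReal.ofReal (η / 2) + ENNReal.ofReal (η / 2) := add_le_add hK₁μ hK₂μ
    _ = ENNReal.ofReal η := by
      rw [← ENNReal.ofReal_add (by positivity) (by positivity), add_halves]

end MeasureTheory

theorem stmt5_general {X : Type*} [MetricSpace X] [CompactSpace X] [MeasurableSpace X]
    [BorelSpace X] (μ : Measure X) [IsProbabilityMeasure μ] (T : X ≃ₜ X)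
    (hT : MeasurePreserving T μ μ) (f : X → ℝ) (hf : MemLp f 2 μ)
    (a : ℕ → ℕ)
    (hae : ∀ᵐ x ∂μ, Tendsto (fun n => f ((⇑T)^[a n] x)) atTop (𝓝 (f x))) :
    ∀ τ > (0 : ℝ), ∀ ε > (0 : ℝ), ∃ K : Set X, IsCompact K ∧
      μ K > ENNReal.ofReal (1 - τ) ∧ ∃ δ > (0 : ℝ),
      ∀ x ∈ K, ∀ y ∈ K, dist x y < δ →
        ∀ n : ℕ, |f ((⇑T)^[a n] x) - f ((⇑T)^[a n] y)| < ε := by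
  intro τ hτ ε hε
  -- the budget is capped so that `1 - η` stays positive also when `τ ≥ 1`
  have hm : min τ 1 / 2 < τ ∧ min τ 1 / 2 < 1 := by
    constructor <;> linarith [min_le_left τ 1, min_le_right τ 1, lt_min hτ one_pos]
  obtain ⟨K, hK, hKμ, hequi⟩ := exists_isCompact_measure_compl_le_forall_dist_lt_of_ae_tendsto
    (fun n => hf.comp_measurePreserving (hT.iterate (a n))) two_ne_zero ENNReal.ofNat_ne_top
    hae (η := min τ 1 / 2) (by positivity)
  refine ⟨K, hK, ?_, by simpa only [Real.dist_eq, Function.comp_apply] using hequi ε hε⟩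
  calc ENNReal.ofReal (1 - τ) < ENNReal.ofReal (1 - min τ 1 / 2) :=
        (ENNReal.ofReal_lt_ofReal_iff (by linarith)).2 (by linarith)
    _ = 1 - ENNReal.ofReal (min τ 1 / 2) := by
      rw [ENNReal.ofReal_sub _ (by positivity), ENNReal.ofReal_one]
    _ ≤ 1 - μ Kᶜ := tsub_le_tsub_left hKμ _
    _ = μ K := by
      rw [prob_compl_eq_one_sub hK.measurableSet,
        ENNReal.sub_sub_cancel ENNReal.one_ne_top prob_le_one]

theorem stmt5 {X : Type*} [MetricSpace X] [CompactSpace X] [MeasurableSpace X]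
    [BorelSpace X] (μ : Measure X) [IsProbabilityMeasure μ] (T : X ≃ₜ X)
    (hT : MeasurePreserving T μ μ) (f : X → ℝ) (hf : MemLp f 2 μ)
    (a : ℕ → ℕ) (ha : StrictMono a)
    (hae : ∀ᵐ x ∂μ, Tendsto (fun n => f ((⇑T)^[a n] x)) atTop (𝓝 (f x))) :
    ∀ τ > (0 : ℝ), ∀ ε > (0 : ℝ), ∃ K : Set X, IsCompact K ∧
      μ K > ENNReal.ofReal (1 - τ) ∧ ∃ δ > (0 : ℝ),
      ∀ x ∈ K, ∀ y ∈ K, dist x y < δ →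
        ∀ n : ℕ, |f ((⇑T)^[a n] x) - f ((⇑T)^[a n] y)| < ε :=
  stmt5_general μ T hT f hf a hae
end

section
/- Let (X,T) be a topological dynamical system, μ ∈ M(X,T), f ∈ L²(μ), and A = {a_i} a strictly increasing sequence of naturals. If f is μ-A-equicontinuous, then {f ∘ T^{a_n} : n ∈ ℕ} is pre-compact in L²(μ). -/
/-!
Truncating `f` at a level `M` costs little in `Lᵖ`, and, since every `φ i` preserves `μ`, the
cost is the same for each `f ∘ φ i`. The truncated family is bounded by `M` and still
equicontinuous on a compact `K` of almost full measure. On `K`, finitely many of its members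
approximate all the others uniformly: the values at a finite `δ`-net of `K` range over a bounded,
hence totally bounded, subset of a finite-dimensional cube. Off `K`, all members are bounded by `M`
and `Kᶜ` has small measure.
-/

open MeasureTheory Filter
open scoped ENNReal

def clamp (M x : ℝ) : ℝ := max (-M) (min M x)

lemma continuous_clamp (M : ℝ) : Continuous (clamp M) := by
  unfold clamp; fun_prop

lemma abs_clamp_le {M : ℝ} (hM : 0 ≤ M) (x : ℝ) : |clamp M x| ≤ M :=
  abs_le.2 ⟨le_max_left _ _, max_le (by linarith) (min_le_left _ _)⟩

lemma clamp_eq_self {M x : ℝ} (h : |x| ≤ M) : clamp M x = x := by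
  rw [abs_le] at h
  rw [clamp, min_eq_right h.2, max_eq_right h.1]

lemma abs_clamp_sub_clamp_le (M x y : ℝ) : |clamp M x - clamp M y| ≤ |x - y| :=
  (abs_max_sub_max_le_max _ _ _ _).trans <| max_le (by simp) <|
    (abs_min_sub_min_le_max _ _ _ _).trans <| max_le (by simp) le_rfl

lemma abs_sub_clamp_le {M : ℝ} (hM : 0 ≤ M) (x : ℝ) : |x - clamp M x| ≤ |x| := by
  unfold clamp
  rcases le_total x (-M) with h | h
  · rw [min_eq_right (by linarith), max_eq_left h]
    rw [abs_of_nonpos (by linarith), abs_of_nonpos (by linarith)]; linarith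
  rcases le_total x M with h' | h'
  · rw [min_eq_right h', max_eq_right h]; simp
  · rw [min_eq_left h', max_eq_right (by linarith), abs_of_nonneg (by linarith),
      abs_of_nonneg (by linarith)]; linarith

theorem TotallyBounded.exists_finset_forall_abs_sub_lt {ι X : Type*} [PseudoMetricSpace X]
    {K : Set X} (hK : TotallyBounded K) {h : ι → X → ℝ} {M : ℝ}
    (hbdd : ∀ i, ∀ x ∈ K, |h i x| ≤ M)
    (hequi : ∀ ε > (0 : ℝ), ∃ δ > (0 : ℝ), ∀ x ∈ K, ∀ y ∈ K, dist x y < δ →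
      ∀ i, |h i x - h i y| < ε)
    {ε : ℝ} (hε : 0 < ε) : ∃ F : Finset ι, ∀ i, ∃ j ∈ F, ∀ x ∈ K, |h i x - h j x| < ε := by
  obtain ⟨δ, hδ, hδh⟩ := hequi (ε / 3) (by positivity)
  obtain ⟨t, htK, htfin, hKt⟩ := Metric.finite_approx_of_totallyBounded hK δ hδ
  have := htfin.fintype
  let v : ι → t → ℝ := fun i c => h i c
  have hv : TotallyBounded (v '' Set.univ) := by
    have hcube := isCompact_univ_pi fun _ : t => isCompact_Icc (a := -M) (b := M)
    refine hcube.totallyBounded.subset ?_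
    rintro _ ⟨i, -, rfl⟩ c -
    exact abs_le.1 (hbdd i c (htK c.2))
  obtain ⟨u, -, hufin, hu⟩ := Set.exists_subset_image_finite_and.1
    (Metric.finite_approx_of_totallyBounded hv (ε / 3) (by positivity))
  refine ⟨hufin.toFinset, fun i => ?_⟩
  obtain ⟨_, ⟨j, hj, rfl⟩, hij⟩ := Set.mem_iUnion₂.1 (hu ⟨i, trivial, rfl⟩)
  refine ⟨j, hufin.mem_toFinset.2 hj, fun x hx => ?_⟩
  obtain ⟨c, hc, hxc⟩ := Set.mem_iUnion₂.1 (hKt hx)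
  have hc' : |h i c - h j c| < ε / 3 := by
    have := (dist_le_pi_dist (v i) (v j) ⟨c, hc⟩).trans_lt hij
    simpa [v, Real.dist_eq] using this
  have h₁ := abs_lt.1 (hδh x hx c (htK hc) hxc i)
  have h₂ := abs_lt.1 hc'
  have h₃ := abs_lt.1 (hδh x hx c (htK hc) hxc j)
  rw [abs_lt]
  constructor <;> linarith

namespace MeasureTheory

variable {α : Type*} [MeasurableSpace α] {μ : Measure α} {p : ℝ≥0∞}

lemma MemLp.exists_eLpNorm_sub_clamp_le {f : α → ℝ} (hf : MemLp f p μ) {ε : ℝ} (hε : 0 < ε) :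
    ∃ M, 0 ≤ M ∧ eLpNorm (fun x => f x - clamp M (f x)) p μ ≤ ENNReal.ofReal ε := by
  obtain ⟨g, hg, hfg⟩ := hf.aestronglyMeasurable
  obtain ⟨M, hM, hle⟩ := (hf.ae_eq hfg).eLpNorm_indicator_norm_ge_pos_le hg hε
  refine ⟨M, hM.le, le_trans ?_ hle⟩
  calc eLpNorm (fun x => f x - clamp M (f x)) p μ
      = eLpNorm (fun x => g x - clamp M (g x)) p μ :=
        eLpNorm_congr_ae (hfg.mono fun x hx => by simp only [hx])
    _ ≤ _ := eLpNorm_mono fun x => ?_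
  set y := g x
  by_cases hy : M ≤ |y|
  · rw [Set.indicator_of_mem (by simpa [← NNReal.coe_le_coe] using hy)]
    exact abs_sub_clamp_le hM.le y
  · simp [clamp_eq_self (not_le.1 hy).le]

lemma prob_compl_le_of_ofReal_one_sub_le [IsProbabilityMeasure μ] {s : Set α} (hs : MeasurableSet s)
    {τ : ℝ} (h : ENNReal.ofReal (1 - τ) ≤ μ s) : μ sᶜ ≤ ENNReal.ofReal τ := by
  rw [prob_compl_eq_one_sub hs, tsub_le_iff_left]
  calc (1 : ℝ≥0∞) = ENNReal.ofReal ((1 - τ) + τ) := by simp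
    _ ≤ ENNReal.ofReal (1 - τ) + ENNReal.ofReal τ := ENNReal.ofReal_add_le
    _ ≤ μ s + ENNReal.ofReal τ := by gcongr

lemma eLpNorm_sub_le_add_add {E : Type*} [NormedAddCommGroup E] {u v u' v' : α → E}
    (hu : AEStronglyMeasurable u μ) (hv : AEStronglyMeasurable v μ)
    (hu' : AEStronglyMeasurable u' μ) (hv' : AEStronglyMeasurable v' μ) (hp : 1 ≤ p) :
    eLpNorm (u - v) p μ ≤
      eLpNorm (u - u') p μ + eLpNorm (u' - v') p μ + eLpNorm (v' - v) p μ := by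
  have hsplit : u - v = (u - u') + (u' - v') + (v' - v) := by abel
  rw [hsplit]
  refine (eLpNorm_add_le ((hu.sub hu').add (hu'.sub hv')) (hv'.sub hv) hp).trans ?_
  gcongr
  exact eLpNorm_add_le (hu.sub hu') (hu'.sub hv') hp

lemma eLpNorm_le_ofReal_add_eLpNorm_indicator_compl [IsProbabilityMeasure μ] {u : α → ℝ}
    (hu : AEStronglyMeasurable u μ) {K : Set α} (hK : MeasurableSet K) {η C : ℝ} (hη : 0 ≤ η)
    (hηK : ∀ x ∈ K, |u x| ≤ η) (hC : ∀ x, |u x| ≤ C) (hp : 1 ≤ p) :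
    eLpNorm u p μ ≤ ENNReal.ofReal η + eLpNorm (Kᶜ.indicator fun _ => C) p μ := by
  rw [← Set.indicator_self_add_compl K u]
  refine (eLpNorm_add_le (hu.indicator hK) (hu.indicator hK.compl) hp).trans (add_le_add ?_ ?_)
  · have hbound : ∀ x, ‖K.indicator u x‖ ≤ η := fun x => by
      by_cases hx : x ∈ K
      · simpa [hx] using hηK x hx
      · simpa [hx] using hη
    simpa using eLpNorm_le_of_ae_bound (μ := μ) (p := p) (Eventually.of_forall hbound)
  · refine eLpNorm_mono fun x => ?_
    by_cases hx : x ∈ K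
    · simp [hx]
    · simpa [hx] using (hC x).trans (le_abs_self C)

end MeasureTheory

/-- The paper's `μ`-`A`-equicontinuity of `f` is
`MeasureEquicontinuous μ (fun n => f ∘ T^[a n])`. -/
def MeasureEquicontinuous {ι X : Type*} [PseudoMetricSpace X] [MeasurableSpace X]
    (μ : Measure X) (h : ι → X → ℝ) : Prop :=
  ∀ τ > (0 : ℝ), ∃ K : Set X, IsCompact K ∧ μ K > ENNReal.ofReal (1 - τ) ∧
    ∀ ε > (0 : ℝ), ∃ δ > (0 : ℝ), ∀ x ∈ K, ∀ y ∈ K, dist x y < δ → ∀ i, |h i x - h i y| < ε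

namespace MeasureEquicontinuous

variable {ι X : Type*} [MetricSpace X] [MeasurableSpace X] {μ : Measure X}

lemma clamp_comp {h : ι → X → ℝ} (hequi : MeasureEquicontinuous μ h) (M : ℝ) :
    MeasureEquicontinuous μ fun i x => clamp M (h i x) := fun τ hτ =>
  (hequi τ hτ).imp fun _ ⟨hK, hKμ, hKequi⟩ => ⟨hK, hKμ, fun ε hε =>
    (hKequi ε hε).imp fun _ ⟨hδ, hδK⟩ => ⟨hδ, fun x hx y hy hxy i =>
      (abs_clamp_sub_clamp_le M _ _).trans_lt (hδK x hx y hy hxy i)⟩⟩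

variable [OpensMeasurableSpace X] [IsProbabilityMeasure μ] {p : ℝ≥0∞}

theorem exists_finset_eLpNorm_sub_le_of_abs_le {h : ι → X → ℝ}
    (hequi : MeasureEquicontinuous μ h) (hh : ∀ i, AEStronglyMeasurable (h i) μ) {M : ℝ}
    (hM : ∀ i x, |h i x| ≤ M) (hp : 1 ≤ p) (hp_top : p ≠ ∞) {ε : ℝ} (hε : 0 < ε) :
    ∃ F : Finset ι, ∀ i, ∃ j ∈ F, eLpNorm (h i - h j) p μ ≤ ENNReal.ofReal ε := by
  have hη : 0 < ε / 2 := by positivity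
  obtain ⟨τ, hτ, hτsmall⟩ := (memLp_const (μ := μ) (2 * M)).eLpNorm_indicator_le hp hp_top hη
  obtain ⟨K, hK, hKμ, hKequi⟩ := hequi τ hτ
  obtain ⟨F, hF⟩ := hK.totallyBounded.exists_finset_forall_abs_sub_lt
    (fun i x _ => hM i x) hKequi hη
  refine ⟨F, fun i => (hF i).imp fun j ⟨hj, hij⟩ => ⟨hj, ?_⟩⟩
  calc eLpNorm (h i - h j) p μ
      ≤ ENNReal.ofReal (ε / 2) + eLpNorm (Kᶜ.indicator fun _ => 2 * M) p μ :=
        eLpNorm_le_ofReal_add_eLpNorm_indicator_compl ((hh i).sub (hh j)) hK.measurableSet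
          hη.le (fun x hx => (hij x hx).le)
          (fun x => (abs_sub _ _).trans (by linarith [hM i x, hM j x])) hp
    _ ≤ ENNReal.ofReal (ε / 2) + ENNReal.ofReal (ε / 2) := by
        gcongr
        exact hτsmall _ hK.measurableSet.compl
          (prob_compl_le_of_ofReal_one_sub_le hK.measurableSet hKμ.le)
    _ = ENNReal.ofReal ε := by rw [← ENNReal.ofReal_add hη.le hη.le, add_halves]

theorem exists_finset_eLpNorm_comp_sub_lt {φ : ι → X → X}
    (hφ : ∀ i, MeasurePreserving (φ i) μ μ) {f : X → ℝ} (hp : 1 ≤ p) (hp_top : p ≠ ∞)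
    (hf : MemLp f p μ) (hequi : MeasureEquicontinuous μ fun i x => f (φ i x)) {ε : ℝ}
    (hε : 0 < ε) :
    ∃ F : Finset ι, ∀ i, ∃ j ∈ F,
      eLpNorm (fun x => f (φ i x) - f (φ j x)) p μ < ENNReal.ofReal ε := by
  have hη : 0 < ε / 4 := by positivity
  obtain ⟨M, hM, hfM⟩ := hf.exists_eLpNorm_sub_clamp_le hη
  let g : ι → X → ℝ := fun i x => f (φ i x)
  let h : ι → X → ℝ := fun i x => clamp M (g i x)
  have hg : ∀ i, AEStronglyMeasurable (g i) μ := fun i =>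
    hf.aestronglyMeasurable.comp_measurePreserving (hφ i)
  have hh : ∀ i, AEStronglyMeasurable (h i) μ := fun i =>
    (continuous_clamp M).comp_aestronglyMeasurable (hg i)
  have hgh : ∀ i, eLpNorm (g i - h i) p μ ≤ ENNReal.ofReal (ε / 4) := fun i =>
    (eLpNorm_comp_measurePreserving (f := φ i) (g := fun y => f y - clamp M (f y))
      (hf.aestronglyMeasurable.sub ((continuous_clamp M).comp_aestronglyMeasurable
        hf.aestronglyMeasurable)) (hφ i)).trans_le hfM
  obtain ⟨F, hF⟩ := (hequi.clamp_comp M).exists_finset_eLpNorm_sub_le_of_abs_le hh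
    (fun _ _ => abs_clamp_le hM _) hp hp_top hη
  refine ⟨F, fun i => (hF i).imp fun j ⟨hj, hij⟩ => ⟨hj, ?_⟩⟩
  calc eLpNorm (g i - g j) p μ
      ≤ eLpNorm (g i - h i) p μ + eLpNorm (h i - h j) p μ + eLpNorm (h j - g j) p μ :=
        eLpNorm_sub_le_add_add (hg i) (hg j) (hh i) (hh j) hp
    _ ≤ ENNReal.ofReal (ε / 4) + ENNReal.ofReal (ε / 4) + ENNReal.ofReal (ε / 4) := by
        rw [eLpNorm_sub_comm (h j)]
        gcongr
        exacts [hgh i, hgh j]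
    _ < ENNReal.ofReal ε := by
        rw [← ENNReal.ofReal_add hη.le hη.le, ← ENNReal.ofReal_add (by positivity) hη.le,
          ENNReal.ofReal_lt_ofReal_iff hε]
        linarith

end MeasureEquicontinuous

theorem stmt7_general {X : Type*} [MetricSpace X] [MeasurableSpace X]
    [BorelSpace X] (μ : Measure X) [IsProbabilityMeasure μ] (T : X ≃ₜ X)
    (hT : MeasurePreserving T μ μ) (f : X → ℝ) (hf : MemLp f 2 μ)
    (a : ℕ → ℕ)
    (heq : ∀ τ > (0 : ℝ), ∃ K : Set X, IsCompact K ∧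
      μ K > ENNReal.ofReal (1 - τ) ∧ ∀ ε > (0 : ℝ), ∃ δ > (0 : ℝ),
      ∀ x ∈ K, ∀ y ∈ K, dist x y < δ →
        ∀ n : ℕ, |f ((⇑T)^[a n] x) - f ((⇑T)^[a n] y)| < ε) :
    ∀ ε > (0 : ℝ), ∃ F : Finset ℕ, ∀ n : ℕ, ∃ m ∈ F,
      eLpNorm (fun x => f ((⇑T)^[a n] x) - f ((⇑T)^[a m] x)) 2 μ
        < ENNReal.ofReal ε :=
  fun _ hε => MeasureEquicontinuous.exists_finset_eLpNorm_comp_sub_lt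
    (fun n => hT.iterate (a n)) one_le_two ENNReal.ofNat_ne_top hf heq hε

theorem stmt7 {X : Type*} [MetricSpace X] [CompactSpace X] [MeasurableSpace X]
    [BorelSpace X] (μ : Measure X) [IsProbabilityMeasure μ] (T : X ≃ₜ X)
    (hT : MeasurePreserving T μ μ) (f : X → ℝ) (hf : MemLp f 2 μ)
    (a : ℕ → ℕ) (ha : StrictMono a)
    (heq : ∀ τ > (0 : ℝ), ∃ K : Set X, IsCompact K ∧
      μ K > ENNReal.ofReal (1 - τ) ∧ ∀ ε > (0 : ℝ), ∃ δ > (0 : ℝ),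
      ∀ x ∈ K, ∀ y ∈ K, dist x y < δ →
        ∀ n : ℕ, |f ((⇑T)^[a n] x) - f ((⇑T)^[a n] y)| < ε) :
    ∀ ε > (0 : ℝ), ∃ F : Finset ℕ, ∀ n : ℕ, ∃ m ∈ F,
      eLpNorm (fun x => f ((⇑T)^[a n] x) - f ((⇑T)^[a m] x)) 2 μ
        < ENNReal.ofReal ε :=
  stmt7_general μ T hT f hf a heq
end

section
/- Let (X,T) be a topological dynamical system and μ ∈ M(X,T). Suppose every f in a dense subset {f_n} of C(X) is μ-A-equicontinuous for a fixed strictly increasing sequence A ⊆ ℕ, and equip X with the metric d(x,y) = Σ_n |f_n(x) − f_n(y)| / (2^{n+1} ‖f_n‖_∞). Then (X,T) is μ-A-equicontinuous: for each τ > 0 there is a compact K with μ(K) > 1 − τ such that {T^{a_n}|_K} is uniformly equicontinuous. -/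
/-!
For each `n` pick a compact set `K n` of measure `> 1 - ε n`, with `∑ ε n < τ`, on which `f n` is
uniformly equicontinuous along the times `a m`; all of them are so on `⋂ n, K n`, whose measure is
still `> 1 - τ`. Since `d` is a series of the pulled-back distances `|f n x - f n y|` dominated by
a summable sequence, finitely many of them control `d` up to a small tail.
-/

open MeasureTheory Filter

open scoped ENNReal Uniformity

theorem Metric.uniformEquicontinuousOn_iff {ι β α : Type*} [PseudoMetricSpace β]
    [PseudoMetricSpace α] {F : ι → β → α} {S : Set β} :
    UniformEquicontinuousOn F S ↔ ∀ ε > 0, ∃ δ > 0, ∀ x ∈ S, ∀ y ∈ S, dist x y < δ →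
      ∀ i, dist (F i x) (F i y) < ε := by
  rw [(Metric.uniformity_basis_dist.inf_principal (S ×ˢ S)).uniformEquicontinuousOn_iff
    Metric.uniformity_basis_dist]
  simp only [Set.mem_inter_iff, Set.mem_ofPred_eq, Set.mem_prod]
  exact forall₂_congr fun ε _ => exists_congr fun δ => and_congr_right fun _ =>
    ⟨fun h x hx y hy hxy => h x y ⟨hxy, hx, hy⟩, fun h x y hxy => h x hxy.2.1 y hxy.2.2 hxy.1⟩

section Equicontinuity

variable {ι β α γ : Type*} [UniformSpace β] [PseudoMetricSpace α] [PseudoMetricSpace γ]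
  {S : Set β}

theorem UniformEquicontinuousOn.eventually_mul_dist_lt {G : ι → β → γ}
    (hG : UniformEquicontinuousOn G S) {w : ℝ} (hw : 0 ≤ w) {η : ℝ} (hη : 0 < η) :
    ∀ᶠ p in 𝓤 β ⊓ 𝓟 (S ×ˢ S), ∀ i, w * dist (G i p.1) (G i p.2) < η := by
  filter_upwards [Metric.uniformity_basis_dist.uniformEquicontinuousOn_iff_right.1 hG
    (η / (w + 1)) (by positivity)] with p hp i
  calc w * dist (G i p.1) (G i p.2) ≤ (w + 1) * dist (G i p.1) (G i p.2) :=
        mul_le_mul_of_nonneg_right (by linarith) dist_nonneg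
    _ < η := (lt_div_iff₀' (by positivity)).1 (hp i)

theorem uniformEquicontinuousOn_of_dist_eq_tsum {F : ι → β → α} {f : ℕ → α → γ}
    {w b : ℕ → ℝ} (hw : ∀ n, 0 ≤ w n) (hb : Summable b)
    (hfb : ∀ n x y, w n * dist (f n x) (f n y) ≤ b n)
    (hd : ∀ x y, dist x y = ∑' n, w n * dist (f n x) (f n y))
    (hF : ∀ n, UniformEquicontinuousOn (fun i => f n ∘ F i) S) :
    UniformEquicontinuousOn F S := by
  rw [Metric.uniformity_basis_dist.uniformEquicontinuousOn_iff_right]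
  intro ε hε
  obtain ⟨N, hN⟩ : ∃ N, ∑' k, b (k + N) < ε / 2 :=
    ((tendsto_sum_nat_add b).eventually (gt_mem_nhds (half_pos hε))).exists
  have hhead : ∀ n, ∀ᶠ p in 𝓤 β ⊓ 𝓟 (S ×ˢ S),
      ∀ i, w n * dist (f n (F i p.1)) (f n (F i p.2)) < ε / 2 / (N + 1) :=
    fun n => (hF n).eventually_mul_dist_lt (hw n) (by positivity)
  filter_upwards [(Finset.range N).eventually_all.2 fun n _ => hhead n] with p hp i
  set g := fun n => w n * dist (f n (F i p.1)) (f n (F i p.2))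
  have hg : Summable g :=
    hb.of_nonneg_of_le (fun n => mul_nonneg (hw n) dist_nonneg) fun n => hfb n _ _
  have hhead_le : ∑ n ∈ Finset.range N, g n ≤ ε / 2 :=
    calc ∑ n ∈ Finset.range N, g n ≤ ∑ _n ∈ Finset.range N, ε / 2 / (N + 1) :=
          Finset.sum_le_sum fun n hn => (hp n hn i).le
      _ = N / (N + 1) * (ε / 2) := by
          rw [Finset.sum_const, Finset.card_range, nsmul_eq_mul]; ring
      _ ≤ 1 * (ε / 2) := by gcongr; exact (div_le_one (by positivity)).2 (by linarith)
      _ = ε / 2 := one_mul _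
  have htail_le : ∑' k, g (k + N) ≤ ∑' k, b (k + N) :=
    ((summable_nat_add_iff N).2 hg).tsum_le_tsum (fun k => hfb _ _ _)
      ((summable_nat_add_iff N).2 hb)
  calc dist (F i p.1) (F i p.2) = ∑ n ∈ Finset.range N, g n + ∑' k, g (k + N) := by
        rw [hd, hg.sum_add_tsum_nat_add]
    _ < ε := by linarith

end Equicontinuity

theorem one_sub_lt_measure_iInter {α ι : Type*} [MeasurableSpace α] [Countable ι]
    {μ : Measure α} [IsProbabilityMeasure μ] {K : ι → Set α} (hK : ∀ i, MeasurableSet (K i))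
    {ε : ι → ℝ≥0∞} {τ : ℝ≥0∞} (hτ : τ ≤ 1) (hKε : ∀ i, 1 - ε i < μ (K i))
    (hετ : ∑' i, ε i < τ) :
    1 - τ < μ (⋂ i, K i) := by
  have hcompl : ∀ i, μ (K i)ᶜ < ε i := fun i => by
    rw [prob_compl_eq_one_sub (hK i)]
    exact ENNReal.sub_lt_of_sub_lt prob_le_one (.inl ENNReal.one_ne_top) (hKε i)
  have hInter : μ (⋂ i, K i)ᶜ < τ :=
    calc μ (⋂ i, K i)ᶜ = μ (⋃ i, (K i)ᶜ) := by rw [Set.compl_iInter]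
      _ ≤ ∑' i, μ (K i)ᶜ := measure_iUnion_le _
      _ ≤ ∑' i, ε i := ENNReal.tsum_le_tsum fun i => (hcompl i).le
      _ < τ := hετ
  rw [prob_compl_eq_one_sub (.iInter hK)] at hInter
  exact ENNReal.sub_lt_of_sub_lt hτ (.inl ENNReal.one_ne_top) hInter

theorem ContinuousMap.inv_two_pow_mul_norm_mul_dist_le {X : Type*} [TopologicalSpace X]
    [CompactSpace X]
    (f : C(X, ℝ)) (n : ℕ) (x y : X) :
    (2 ^ (n + 1) * ‖f‖)⁻¹ * dist (f x) (f y) ≤ (1 / 2) ^ n := by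
  rw [inv_mul_eq_div]
  refine div_le_of_le_mul₀ (by positivity) (by positivity) ?_
  calc dist (f x) (f y) ≤ 2 * ‖f‖ := f.dist_le_two_norm x y
    _ = (1 / 2) ^ n * (2 ^ (n + 1) * ‖f‖) := by
      rw [pow_succ, ← mul_assoc, ← mul_assoc, ← mul_pow]; norm_num

theorem stmt9_general {X : Type*} [MetricSpace X] [CompactSpace X] [MeasurableSpace X]
    [BorelSpace X] (μ : Measure X) [IsProbabilityMeasure μ] (T : X ≃ₜ X)
    (f : ℕ → C(X, ℝ))
    (a : ℕ → ℕ)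
    (hd : ∀ x y : X, dist x y = ∑' n : ℕ, |f n x - f n y| / (2 ^ (n + 1) * ‖f n‖))
    (heq : ∀ n : ℕ, ∀ τ > (0 : ℝ), ∃ K : Set X, IsCompact K ∧
      μ K > ENNReal.ofReal (1 - τ) ∧ ∀ ε > (0 : ℝ), ∃ δ > (0 : ℝ),
      ∀ x ∈ K, ∀ y ∈ K, dist x y < δ →
        ∀ m : ℕ, |f n ((⇑T)^[a m] x) - f n ((⇑T)^[a m] y)| < ε) :
    ∀ τ > (0 : ℝ), ∃ K : Set X, IsCompact K ∧
      μ K > ENNReal.ofReal (1 - τ) ∧ ∀ ε > (0 : ℝ), ∃ δ > (0 : ℝ),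
      ∀ x ∈ K, ∀ y ∈ K, dist x y < δ →
        ∀ m : ℕ, dist ((⇑T)^[a m] x) ((⇑T)^[a m] y) < ε := by
  intro τ hτ
  obtain ⟨ε, hε, hετ⟩ := ENNReal.exists_pos_sum_of_countable
    (lt_min (ENNReal.ofReal_pos.2 hτ) one_pos).ne' ℕ
  choose K hKc hKμ hKeq using fun n => heq n (ε n) (hε n)
  have hF : ∀ n, UniformEquicontinuousOn (fun m => f n ∘ (⇑T)^[a m]) (⋂ n, K n) := fun n =>
    (Metric.uniformEquicontinuousOn_iff.2 <| by
      simpa only [Function.comp_apply, Real.dist_eq] using hKeq n).mono (Set.iInter_subset K n)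
  refine ⟨⋂ n, K n, (isClosed_iInter fun n => (hKc n).isClosed).isCompact, ?_,
    Metric.uniformEquicontinuousOn_iff.1 <| uniformEquicontinuousOn_of_dist_eq_tsum
      (fun n => by positivity) summable_geometric_two
      (fun n => (f n).inv_two_pow_mul_norm_mul_dist_le n)
      (by simpa only [Real.dist_eq, inv_mul_eq_div] using hd) hF⟩
  rw [gt_iff_lt, ENNReal.ofReal_sub _ hτ.le, ENNReal.ofReal_one]
  refine (tsub_le_tsub_left (min_le_left _ 1) 1).trans_lt <| one_sub_lt_measure_iInter
    (fun n => (hKc n).measurableSet) (min_le_right _ _) (fun n => ?_) hετ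
  simpa [ENNReal.ofReal_sub] using hKμ n

theorem stmt9 {X : Type*} [MetricSpace X] [CompactSpace X] [MeasurableSpace X]
    [BorelSpace X] (μ : Measure X) [IsProbabilityMeasure μ] (T : X ≃ₜ X)
    (hT : MeasurePreserving T μ μ)
    (f : ℕ → C(X, ℝ)) (hdense : DenseRange f) (hne : ∀ n, f n ≠ 0)
    (a : ℕ → ℕ) (ha : StrictMono a)
    (hd : ∀ x y : X, dist x y = ∑' n : ℕ, |f n x - f n y| / (2 ^ (n + 1) * ‖f n‖))
    (heq : ∀ n : ℕ, ∀ τ > (0 : ℝ), ∃ K : Set X, IsCompact K ∧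
      μ K > ENNReal.ofReal (1 - τ) ∧ ∀ ε > (0 : ℝ), ∃ δ > (0 : ℝ),
      ∀ x ∈ K, ∀ y ∈ K, dist x y < δ →
        ∀ m : ℕ, |f n ((⇑T)^[a m] x) - f n ((⇑T)^[a m] y)| < ε) :
    ∀ τ > (0 : ℝ), ∃ K : Set X, IsCompact K ∧
      μ K > ENNReal.ofReal (1 - τ) ∧ ∀ ε > (0 : ℝ), ∃ δ > (0 : ℝ),
      ∀ x ∈ K, ∀ y ∈ K, dist x y < δ →
        ∀ m : ℕ, dist ((⇑T)^[a m] x) ((⇑T)^[a m] y) < ε :=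
  stmt9_general μ T f a hd heq
end

section
/- Let (X,T) be a topological dynamical system and μ ∈ M(X,T). If there exists a strictly increasing sequence A = {a_i} ⊆ ℕ such that (X,T) is μ-A-equicontinuous, then for every continuous f : X → ℝ the set {f∘T^{a_n} : n ∈ ℕ} is pre-compact in L²(μ), and consequently {g∘T^{a_n} : n ∈ ℕ} is pre-compact in L²(μ) for every g ∈ L²(μ). -/
/-!
On a compact set `K` of measure close to `1` the functions `f ∘ T^[aₙ]` are uniformly bounded and
equicontinuous, so by Arzelà–Ascoli they have a finite uniform `ε`-net on `K`; off `K` their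
differences are bounded by `2‖f‖` on a set of small measure, which yields a finite `L²` net.
A general `g ∈ L²` is approximated by a continuous `f`: as `T` preserves `μ`,
`‖g ∘ T^[n] - f ∘ T^[n]‖₂ = ‖g - f‖₂` for every `n`, and total boundedness survives uniform
approximation.
-/

open MeasureTheory Filter Topology Set
open scoped ENNReal

theorem TotallyBounded.exists_finset_dist_lt {ι E : Type*} [PseudoMetricSpace E] {u : ι → E}
    (hu : TotallyBounded (range u)) {ε : ℝ} (hε : 0 < ε) :
    ∃ F : Finset ι, ∀ i, ∃ j ∈ F, dist (u i) (u j) < ε := by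
  have hnet := Metric.finite_approx_of_totallyBounded hu ε hε
  rw [← image_univ, exists_subset_image_finite_and] at hnet
  obtain ⟨t, -, ht, hcover⟩ := hnet
  refine ⟨ht.toFinset, fun i => ?_⟩
  obtain ⟨_, ⟨j, hj, rfl⟩, hij⟩ := mem_iUnion₂.1 (hcover (mem_image_of_mem u (mem_univ i)))
  exact ⟨j, ht.mem_toFinset.2 hj, hij⟩

theorem EquicontinuousOn.exists_finset_dist_lt {ι X E : Type*} [TopologicalSpace X]
    [NormedAddCommGroup E] [ProperSpace E] {u : ι → X → E} {K : Set X} (hK : IsCompact K)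
    (hu : EquicontinuousOn u K) {M : ℝ} (hM : ∀ i, ∀ x ∈ K, ‖u i x‖ ≤ M) {ε : ℝ} (hε : 0 < ε) :
    ∃ F : Finset ι, ∀ i, ∃ j ∈ F, ∀ x ∈ K, dist (u i x) (u j x) < ε := by
  have := isCompact_iff_compactSpace.1 hK
  rw [← equicontinuous_restrict_iff] at hu
  let v : ι → BoundedContinuousFunction K E := fun i =>
    .mkOfCompact ⟨K.domRestrict (u i), hu.continuous i⟩
  have hv_equi : Equicontinuous ((↑) : range v → K → E) := by
    convert hu.comp (rangeSplitting v) with w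
    exact congrArg _ (apply_rangeSplitting v w).symm
  have hv : IsCompact (closure (range v)) :=
    BoundedContinuousFunction.arzela_ascoli (Metric.closedBall 0 M) (isCompact_closedBall 0 M)
      _ (by rintro _ x ⟨i, rfl⟩; exact mem_closedBall_zero_iff.2 (hM i x x.2)) hv_equi
  obtain ⟨F, hF⟩ := (hv.totallyBounded.subset subset_closure).exists_finset_dist_lt hε
  refine ⟨F, fun i => ?_⟩
  obtain ⟨j, hj, hij⟩ := hF i
  exact ⟨j, hj, fun x hx => (BoundedContinuousFunction.dist_coe_le_dist ⟨x, hx⟩).trans_lt hij⟩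

theorem UniformContinuous.comp_uniformEquicontinuousOn {ι α β γ : Type*} [UniformSpace α]
    [UniformSpace β] [UniformSpace γ] {g : β → γ} (hg : UniformContinuous g) {F : ι → α → β}
    {S : Set α} (hF : UniformEquicontinuousOn F S) :
    UniformEquicontinuousOn (fun i => g ∘ F i) S :=
  fun _ hU => hF _ (hg hU)

theorem ENNReal.exists_pos_ofReal_rpow_mul_lt {r : ℝ} (hr : 0 < r) {c : ℝ≥0∞} (hc : c ≠ ∞)
    {η : ℝ≥0∞} (hη : 0 < η) : ∃ τ > (0 : ℝ), ENNReal.ofReal τ ^ r * c < η := by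
  have hlim : Tendsto (fun τ : ℝ => ENNReal.ofReal τ ^ r * c) (𝓝[>] 0) (𝓝 0) := by
    have h := ENNReal.Tendsto.mul_const
      (((ENNReal.continuous_rpow_const (y := r)).comp ENNReal.continuous_ofReal).tendsto 0)
      (Or.inr hc)
    simp only [Function.comp_apply, ENNReal.ofReal_zero, ENNReal.zero_rpow_of_pos hr,
      zero_mul] at h
    exact h.mono_left nhdsWithin_le_nhds
  exact ((hlim.eventually (gt_mem_nhds hη)).and self_mem_nhdsWithin).exists.imp
    fun _ h => ⟨h.2, h.1⟩

theorem measure_compl_le_ofReal_of_ofReal_one_sub_lt {α : Type*} [MeasurableSpace α]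
    {μ : Measure α} [IsProbabilityMeasure μ] {s : Set α} (hs : MeasurableSet s) {τ : ℝ}
    (h : ENNReal.ofReal (1 - τ) < μ s) : μ sᶜ ≤ ENNReal.ofReal τ := by
  rw [prob_compl_eq_one_sub hs, tsub_le_iff_left]
  calc (1 : ℝ≥0∞) = ENNReal.ofReal (1 - τ + τ) := by simp
    _ ≤ ENNReal.ofReal (1 - τ) + ENNReal.ofReal τ := ENNReal.ofReal_add_le
    _ ≤ μ s + ENNReal.ofReal τ := by gcongr

section Lp

variable {ι α E : Type*} [MeasurableSpace α] [NormedAddCommGroup E] {p : ℝ≥0∞}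
  {μ : Measure α}

theorem eLpNorm_le_of_norm_le_on_of_norm_le_on_compl (hp : 1 ≤ p) {f : α → E}
    (hf : AEStronglyMeasurable f μ) {s : Set α} (hs : MeasurableSet s) {a b : ℝ}
    (ha : ∀ x ∈ s, ‖f x‖ ≤ a) (hb : ∀ x ∉ s, ‖f x‖ ≤ b) :
    eLpNorm f p μ ≤ μ s ^ p.toReal⁻¹ * .ofReal a + μ sᶜ ^ p.toReal⁻¹ * .ofReal b := by
  calc eLpNorm f p μ = eLpNorm (s.indicator f + sᶜ.indicator f) p μ := by
        rw [indicator_self_add_compl]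
    _ ≤ eLpNorm (s.indicator f) p μ + eLpNorm (sᶜ.indicator f) p μ :=
        eLpNorm_add_le (hf.indicator hs) (hf.indicator hs.compl) hp
    _ ≤ _ := by
        rw [eLpNorm_indicator_eq_eLpNorm_restrict hs,
          eLpNorm_indicator_eq_eLpNorm_restrict hs.compl]
        gcongr
        · simpa using eLpNorm_le_of_ae_bound (ae_restrict_of_forall_mem hs ha) (p := p)
        · simpa using eLpNorm_le_of_ae_bound (ae_restrict_of_forall_mem hs.compl hb) (p := p)

/-- Precompactness of `{u i}` in `Lᵖ(μ)`, expressed by finite `ε`-nets taken from the family. -/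
def TotallyBoundedInLp (p : ℝ≥0∞) (μ : Measure α) (u : ι → α → E) : Prop :=
  ∀ ε > (0 : ℝ), ∃ F : Finset ι, ∀ i, ∃ j ∈ F, eLpNorm (u i - u j) p μ < ENNReal.ofReal ε

theorem TotallyBoundedInLp.of_approx (hp : 1 ≤ p) {u : ι → α → E}
    (hu : ∀ i, AEStronglyMeasurable (u i) μ)
    (h : ∀ ε > (0 : ℝ), ∃ v : ι → α → E, (∀ i, AEStronglyMeasurable (v i) μ) ∧
      (∀ i, eLpNorm (u i - v i) p μ ≤ ENNReal.ofReal ε) ∧ TotallyBoundedInLp p μ v) :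
    TotallyBoundedInLp p μ u := by
  intro ε hε
  obtain ⟨v, hv, huv, hvF⟩ := h (ε / 4) (by positivity)
  obtain ⟨F, hF⟩ := hvF (ε / 4) (by positivity)
  refine ⟨F, fun i => ?_⟩
  obtain ⟨j, hj, hij⟩ := hF i
  refine ⟨j, hj, ?_⟩
  calc eLpNorm (u i - u j) p μ = eLpNorm ((u i - v i) + (v i - v j) - (u j - v j)) p μ := by
        congr 1; abel
    _ ≤ eLpNorm (u i - v i) p μ + eLpNorm (v i - v j) p μ + eLpNorm (u j - v j) p μ :=
        (eLpNorm_sub_le (((hu i).sub (hv i)).add ((hv i).sub (hv j))) ((hu j).sub (hv j)) hp).trans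
          (add_le_add_left (eLpNorm_add_le ((hu i).sub (hv i)) ((hv i).sub (hv j)) hp) _)
    _ ≤ .ofReal (ε / 4) + .ofReal (ε / 4) + .ofReal (ε / 4) :=
        add_le_add (add_le_add (huv i) hij.le) (huv j)
    _ = .ofReal (3 / 4 * ε) := by
        rw [← ENNReal.ofReal_add (by positivity) (by positivity),
          ← ENNReal.ofReal_add (by positivity) (by positivity)]
        ring_nf
    _ < .ofReal ε := (ENNReal.ofReal_lt_ofReal_iff hε).2 (by linarith)

theorem totallyBoundedInLp_comp_of_approx {β : Type*} [MeasurableSpace β] (hp : 1 ≤ p)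
    {ν : Measure β} {φ : ι → α → β} (hφ : ∀ i, MeasurePreserving (φ i) μ ν) {g : β → E}
    (hg : AEStronglyMeasurable g ν)
    (h : ∀ ε > (0 : ℝ), ∃ f : β → E, AEStronglyMeasurable f ν ∧
      eLpNorm (g - f) p ν ≤ ENNReal.ofReal ε ∧ TotallyBoundedInLp p μ (fun i => f ∘ φ i)) :
    TotallyBoundedInLp p μ (fun i => g ∘ φ i) := by
  refine .of_approx hp (fun i => hg.comp_measurePreserving (hφ i)) fun ε hε => ?_
  obtain ⟨f, hf, hgf, hfφ⟩ := h ε hε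
  refine ⟨fun i => f ∘ φ i, fun i => hf.comp_measurePreserving (hφ i), fun i => ?_, hfφ⟩
  exact (eLpNorm_comp_measurePreserving (hg.sub hf) (hφ i)).trans_le hgf

theorem totallyBoundedInLp_of_equicontinuousOn [TopologicalSpace α] [T2Space α]
    [OpensMeasurableSpace α] [ProperSpace E] (hp₁ : 1 ≤ p) (hp : p ≠ ∞) [IsFiniteMeasure μ]
    {u : ι → α → E} (hu : ∀ i, AEStronglyMeasurable (u i) μ) {M : ℝ} (hM : ∀ i x, ‖u i x‖ ≤ M)
    (h : ∀ τ > (0 : ℝ), ∃ K, IsCompact K ∧ μ Kᶜ ≤ ENNReal.ofReal τ ∧ EquicontinuousOn u K) :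
    TotallyBoundedInLp p μ u := by
  intro ε hε
  have hr : 0 < p.toReal⁻¹ :=
    inv_pos.2 (ENNReal.toReal_pos (zero_lt_one.trans_le hp₁).ne' hp)
  have hε₂ : 0 < ENNReal.ofReal (ε / 2) := ENNReal.ofReal_pos.2 (by positivity)
  obtain ⟨τ, hτ, hτε⟩ := ENNReal.exists_pos_ofReal_rpow_mul_lt hr ENNReal.ofReal_ne_top hε₂
    (c := .ofReal (2 * M))
  obtain ⟨K, hK, hKτ, hKu⟩ := h τ hτ
  obtain ⟨δ, hδ, hδε⟩ := ENNReal.exists_pos_ofReal_rpow_mul_lt one_pos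
    (ENNReal.rpow_ne_top_of_nonneg hr.le (measure_ne_top μ univ)) hε₂
  obtain ⟨F, hF⟩ := hKu.exists_finset_dist_lt hK (fun i x _ => hM i x) hδ
  refine ⟨F, fun i => ?_⟩
  obtain ⟨j, hj, hij⟩ := hF i
  refine ⟨j, hj, ?_⟩
  calc eLpNorm (u i - u j) p μ
      ≤ μ K ^ p.toReal⁻¹ * .ofReal δ + μ Kᶜ ^ p.toReal⁻¹ * .ofReal (2 * M) :=
        eLpNorm_le_of_norm_le_on_of_norm_le_on_compl hp₁ ((hu i).sub (hu j)) hK.measurableSet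
          (fun x hx => (dist_eq_norm (u i x) (u j x) ▸ hij x hx).le)
          (fun x _ => (norm_sub_le _ _).trans (by linarith [hM i x, hM j x]))
    _ ≤ .ofReal δ ^ (1 : ℝ) * μ univ ^ p.toReal⁻¹ + .ofReal τ ^ p.toReal⁻¹ * .ofReal (2 * M) := by
        rw [ENNReal.rpow_one, mul_comm]
        gcongr
        exact subset_univ K
    _ < .ofReal (ε / 2) + .ofReal (ε / 2) := ENNReal.add_lt_add hδε hτε
    _ = .ofReal ε := by rw [← ENNReal.ofReal_add (by positivity) (by positivity), add_halves]

theorem totallyBoundedInLp_comp_of_uniformEquicontinuousOn {Y : Type*} [UniformSpace α]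
    [T2Space α] [OpensMeasurableSpace α] [MetricSpace Y] [CompactSpace Y] [MeasurableSpace Y]
    [BorelSpace Y] [ProperSpace E] (hp₁ : 1 ≤ p) (hp : p ≠ ∞) [IsFiniteMeasure μ]
    (f : C(Y, E)) {φ : ι → α → Y} (hφ : ∀ i, Measurable (φ i))
    (h : ∀ τ > (0 : ℝ), ∃ K, IsCompact K ∧ μ Kᶜ ≤ ENNReal.ofReal τ ∧
      UniformEquicontinuousOn φ K) :
    TotallyBoundedInLp p μ (fun i => f ∘ φ i) :=
  totallyBoundedInLp_of_equicontinuousOn hp₁ hp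
    (fun i => f.continuous.comp_aestronglyMeasurable (hφ i).aestronglyMeasurable)
    (fun i x => f.norm_coe_le_norm (φ i x))
    fun τ hτ => (h τ hτ).imp fun _ ⟨hK, hKτ, hKφ⟩ => ⟨hK, hKτ,
      ((CompactSpace.uniformContinuous_of_continuous f.continuous).comp_uniformEquicontinuousOn
        hKφ).equicontinuousOn⟩

end Lp

theorem stmt11_general {X : Type*} [MetricSpace X] [CompactSpace X] [MeasurableSpace X]
    [BorelSpace X] (μ : Measure X) [IsProbabilityMeasure μ] (T : X ≃ₜ X)
    (hT : MeasurePreserving T μ μ) (a : ℕ → ℕ)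
    (heq : ∀ τ > (0 : ℝ), ∃ K : Set X, IsCompact K ∧
      μ K > ENNReal.ofReal (1 - τ) ∧ ∀ ε > (0 : ℝ), ∃ δ > (0 : ℝ),
      ∀ x ∈ K, ∀ y ∈ K, dist x y < δ →
        ∀ n : ℕ, dist ((⇑T)^[a n] x) ((⇑T)^[a n] y) < ε) :
    (∀ f : C(X, ℝ), ∀ ε > (0 : ℝ), ∃ F : Finset ℕ, ∀ n : ℕ, ∃ m ∈ F,
        eLpNorm (fun x => f ((⇑T)^[a n] x) - f ((⇑T)^[a m] x)) 2 μ
          < ENNReal.ofReal ε) ∧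
    (∀ g : X → ℝ, MemLp g 2 μ → ∀ ε > (0 : ℝ), ∃ F : Finset ℕ, ∀ n : ℕ, ∃ m ∈ F,
        eLpNorm (fun x => g ((⇑T)^[a n] x) - g ((⇑T)^[a m] x)) 2 μ
          < ENNReal.ofReal ε) := by
  have hequi : ∀ τ > (0 : ℝ), ∃ K, IsCompact K ∧ μ Kᶜ ≤ ENNReal.ofReal τ ∧
      UniformEquicontinuousOn (fun n => (⇑T)^[a n]) K := by
    intro τ hτ
    obtain ⟨K, hK, hKμ, hKequi⟩ := heq τ hτ
    refine ⟨K, hK, measure_compl_le_ofReal_of_ofReal_one_sub_lt hK.measurableSet hKμ, ?_⟩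
    rw [← uniformEquicontinuous_restrict_iff, Metric.uniformEquicontinuous_iff]
    intro ε hε
    obtain ⟨δ, hδ, hδε⟩ := hKequi ε hε
    exact ⟨δ, hδ, fun x y hxy n => hδε x x.2 y y.2 hxy n⟩
  have hcont (f : C(X, ℝ)) : TotallyBoundedInLp 2 μ (fun n => f ∘ (⇑T)^[a n]) :=
    totallyBoundedInLp_comp_of_uniformEquicontinuousOn one_le_two ENNReal.ofNat_ne_top f
      (fun n => (T.continuous.iterate (a n)).measurable) hequi
  refine ⟨hcont, fun g hg => totallyBoundedInLp_comp_of_approx one_le_two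
    (fun n => hT.iterate (a n)) hg.1 fun ε hε => ?_⟩
  obtain ⟨f, -, hgf, hf, -⟩ := hg.exists_hasCompactSupport_eLpNorm_sub_le ENNReal.ofNat_ne_top
    (ENNReal.ofReal_pos.2 hε).ne'
  exact ⟨f, hf.aestronglyMeasurable, hgf, hcont ⟨f, hf⟩⟩

theorem stmt11 {X : Type*} [MetricSpace X] [CompactSpace X] [MeasurableSpace X]
    [BorelSpace X] (μ : Measure X) [IsProbabilityMeasure μ] (T : X ≃ₜ X)
    (hT : MeasurePreserving T μ μ) (a : ℕ → ℕ) (ha : StrictMono a)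
    (heq : ∀ τ > (0 : ℝ), ∃ K : Set X, IsCompact K ∧
      μ K > ENNReal.ofReal (1 - τ) ∧ ∀ ε > (0 : ℝ), ∃ δ > (0 : ℝ),
      ∀ x ∈ K, ∀ y ∈ K, dist x y < δ →
        ∀ n : ℕ, dist ((⇑T)^[a n] x) ((⇑T)^[a n] y) < ε) :
    (∀ f : C(X, ℝ), ∀ ε > (0 : ℝ), ∃ F : Finset ℕ, ∀ n : ℕ, ∃ m ∈ F,
        eLpNorm (fun x => f ((⇑T)^[a n] x) - f ((⇑T)^[a m] x)) 2 μ
          < ENNReal.ofReal ε) ∧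
    (∀ g : X → ℝ, MemLp g 2 μ → ∀ ε > (0 : ℝ), ∃ F : Finset ℕ, ∀ n : ℕ, ∃ m ∈ F,
        eLpNorm (fun x => g ((⇑T)^[a n] x) - g ((⇑T)^[a m] x)) 2 μ
          < ENNReal.ofReal ε) :=
  stmt11_general μ T hT a heq
end

section
/- Let (X,T) be a topological dynamical system, μ ∈ M(X,T), and suppose there is a strictly increasing sequence A = {a_i} with the function (x,y) ↦ d(T^{a_n}x, T^{a_n}y) converging μ×μ-almost everywhere to d(x,y). Then (X,T) is μ-A-equicontinuous. -/
/-!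
Fix `ε > 0` and let `E` be the closed set of pairs `(x, z)` whose distance is stretched by at most
`ε / 4` under every `f n` with `n ≥ N`. Almost everywhere convergence gives `(μ × μ) Eᶜ → 0` as
`N → ∞`, so by Fubini and Markov's inequality, for a fixed finite cover by `ε / 8`-balls, most
points `x` have an `E`-slice filling more than half of every ball of the cover that contains `x`.
Two such points lying in a common ball `B` then have a common `E`-partner `z ∈ B`, and the triangle
inequality through `z` gives `dist (f n x) (f n y) < ε` for `n ≥ N`. A Lebesgue number of the cover
puts close points into a common ball, uniform continuity handles the finitely many `n < N`, inner
regularity shrinks the good set to a closed one, and intersecting these closed sets over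
`ε = 1 / (k + 1)` with summable losses of measure gives a single compact set.
-/

open MeasureTheory Filter Topology
open Metric Set
open scoped ENNReal

section Majority

variable {X ι : Type*} [MeasurableSpace X] {μ : Measure X}

theorem nonempty_inter_inter_of_measure_compl_lt_half {B S S' : Set X}
    (hS : μ Sᶜ < μ B / 2) (hS' : μ S'ᶜ < μ B / 2) : (B ∩ S ∩ S').Nonempty := by
  by_contra hempty
  have hB : B ⊆ Sᶜ ∪ S'ᶜ := fun x hx => not_and_or.1 fun h => hempty ⟨x, ⟨hx, h.1⟩, h.2⟩
  have := calc μ B ≤ μ Sᶜ + μ S'ᶜ := (measure_mono hB).trans (measure_union_le _ _)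
    _ < μ B / 2 + μ B / 2 := ENNReal.add_lt_add hS hS'
    _ = μ B := ENNReal.add_halves _
  exact this.false

theorem mul_measure_setOf_le_measure_prodMk_preimage_le {Y : Type*} [MeasurableSpace Y]
    {ν : Measure Y} [SFinite ν] {s : Set (X × Y)} (hs : MeasurableSet s) (c : ℝ≥0∞) :
    c * μ {x | c ≤ ν (Prod.mk x ⁻¹' s)} ≤ μ.prod ν s := by
  rw [Measure.prod_apply hs]
  exact mul_meas_ge_le_lintegral₀ (measurable_measure_prodMk_left hs).aemeasurable c

def majoritySet (μ : Measure X) (B : ι → Set X) (s : Set (X × X)) : Set X :=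
  {x | ∀ i, x ∈ B i → μ (Prod.mk x ⁻¹' s)ᶜ < μ (B i) / 2}

theorem exists_mem_of_mem_majoritySet {B : ι → Set X} {s : Set (X × X)} {x y : X} {i : ι}
    (hx : x ∈ majoritySet μ B s) (hy : y ∈ majoritySet μ B s) (hxi : x ∈ B i)
    (hyi : y ∈ B i) : ∃ z ∈ B i, (x, z) ∈ s ∧ (y, z) ∈ s := by
  obtain ⟨z, ⟨hzi, hxz⟩, hyz⟩ := nonempty_inter_inter_of_measure_compl_lt_half (hx i hxi) (hy i hyi)
  exact ⟨z, hzi, hxz, hyz⟩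

theorem measurableSet_majoritySet [Countable ι] [SFinite μ] {B : ι → Set X}
    {s : Set (X × X)} (hB : ∀ i, MeasurableSet (B i)) (hs : MeasurableSet s) :
    MeasurableSet (majoritySet μ B s) := by
  have hslice : Measurable fun x => μ (Prod.mk x ⁻¹' s)ᶜ :=
    measurable_measure_prodMk_left hs.compl
  exact (Measurable.forall fun i =>
    (hB i).mem.imp (measurableSet_lt hslice measurable_const).mem).setOf

theorem measure_compl_majoritySet_le [Fintype ι] [IsFiniteMeasure μ] {B : ι → Set X}
    {s : Set (X × X)} (hs : MeasurableSet s) {ρ : ℝ≥0∞}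
    (hsmall : ∀ i, μ (B i) ≠ 0 → μ.prod μ sᶜ ≤ μ (B i) / 2 * ρ) :
    μ (majoritySet μ B s)ᶜ ≤ Fintype.card ι * ρ := by
  have hcover : (majoritySet μ B s)ᶜ ⊆
      ⋃ i, B i ∩ {x | μ (B i) / 2 ≤ μ (Prod.mk x ⁻¹' sᶜ)} := by
    intro x hx
    simp only [majoritySet, mem_compl_iff, mem_ofPred_eq, not_forall, not_lt] at hx
    obtain ⟨i, hxi, hle⟩ := hx
    exact mem_iUnion.2 ⟨i, hxi, hle⟩
  have hpiece : ∀ i, μ (B i ∩ {x | μ (B i) / 2 ≤ μ (Prod.mk x ⁻¹' sᶜ)}) ≤ ρ := by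
    intro i
    by_cases hBi : μ (B i) = 0
    · exact (measure_mono inter_subset_left).trans (hBi ▸ zero_le)
    refine (ENNReal.mul_le_mul_iff_right (ENNReal.half_pos hBi).ne'
      (ENNReal.div_ne_top (measure_ne_top μ _) two_ne_zero)).1 ?_
    calc μ (B i) / 2 * μ (B i ∩ {x | μ (B i) / 2 ≤ μ (Prod.mk x ⁻¹' sᶜ)})
        ≤ μ (B i) / 2 * μ {x | μ (B i) / 2 ≤ μ (Prod.mk x ⁻¹' sᶜ)} := by
          gcongr; exact inter_subset_right
      _ ≤ μ.prod μ sᶜ := mul_measure_setOf_le_measure_prodMk_preimage_le hs.compl _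
      _ ≤ μ (B i) / 2 * ρ := hsmall i hBi
  calc μ (majoritySet μ B s)ᶜ ≤ ∑ i, μ (B i ∩ {x | μ (B i) / 2 ≤ μ (Prod.mk x ⁻¹' sᶜ)}) :=
        (measure_mono hcover).trans (measure_iUnion_fintype_le _ _)
    _ ≤ ∑ _i : ι, ρ := Finset.sum_le_sum fun i _ => hpiece i
    _ = Fintype.card ι * ρ := by rw [Finset.sum_const, Finset.card_univ, nsmul_eq_mul]

end Majority

section Equicontinuity

variable {X Y : Type*} [PseudoMetricSpace X] [PseudoMetricSpace Y]

def boundedStretchPairs (f : ℕ → X → Y) (η : ℝ) (N : ℕ) : Set (X × X) :=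
  {p | ∀ n ≥ N, dist (f n p.1) (f n p.2) ≤ dist p.1 p.2 + η}

theorem isClosed_boundedStretchPairs {f : ℕ → X → Y} (hf : ∀ n, Continuous (f n)) (η : ℝ)
    (N : ℕ) : IsClosed (boundedStretchPairs f η N) := by
  simp only [boundedStretchPairs, ofPred_forall]
  exact isClosed_iInter fun n => isClosed_iInter fun _ =>
    isClosed_le (((hf n).comp continuous_fst).dist ((hf n).comp continuous_snd))
      (continuous_dist.add continuous_const)

theorem dist_lt_of_mem_boundedStretchPairs {f : ℕ → X → Y} {η r : ℝ} {N n : ℕ} {x y z c : X}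
    (hxz : (x, z) ∈ boundedStretchPairs f η N) (hyz : (y, z) ∈ boundedStretchPairs f η N)
    (hx : x ∈ ball c r) (hy : y ∈ ball c r) (hz : z ∈ ball c r) (hn : N ≤ n) :
    dist (f n x) (f n y) < 4 * r + 2 * η := by
  have hxc := mem_ball.1 hx
  have hyc := mem_ball.1 hy
  have hzc := mem_ball.1 hz
  calc dist (f n x) (f n y) ≤ dist (f n x) (f n z) + dist (f n y) (f n z) :=
        dist_triangle_right _ _ _
    _ ≤ (dist x z + η) + (dist y z + η) := add_le_add (hxz n hn) (hyz n hn)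
    _ ≤ (dist x c + dist z c + η) + (dist y c + dist z c + η) := by
        gcongr <;> exact dist_triangle_right _ _ _
    _ < 4 * r + 2 * η := by linarith

variable [CompactSpace X] [MeasurableSpace X] [BorelSpace X] (μ : Measure X) [IsFiniteMeasure μ]
  {f : ℕ → X → Y}

theorem tendsto_measure_compl_boundedStretchPairs (hf : ∀ n, Continuous (f n))
    (hae : ∀ᵐ p ∂μ.prod μ,
      Tendsto (fun n => dist (f n p.1) (f n p.2)) atTop (𝓝 (dist p.1 p.2)))
    {η : ℝ} (hη : 0 < η) :
    Tendsto (fun N => μ.prod μ (boundedStretchPairs f η N)ᶜ) atTop (𝓝 0) := by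
  have hanti : Antitone fun N => (boundedStretchPairs f η N)ᶜ :=
    fun N M hNM => compl_subset_compl.2 fun p hp n hn => hp n (hNM.trans hn)
  have hnull : μ.prod μ (⋂ N, (boundedStretchPairs f η N)ᶜ) = 0 := by
    refine measure_eq_zero_iff_ae_notMem.2 (hae.mono fun p hp hmem => ?_)
    obtain ⟨N, hN⟩ := eventually_atTop.1 (hp.eventually (ge_mem_nhds (lt_add_of_pos_right _ hη)))
    exact mem_iInter.1 hmem N hN
  simpa only [hnull, Function.comp_def] using tendsto_measure_iInter_atTop
    (fun N => (isClosed_boundedStretchPairs hf η N).measurableSet.compl.nullMeasurableSet)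
    hanti ⟨0, measure_ne_top (μ.prod μ) _⟩

theorem exists_isClosed_measure_compl_le_forall_ge_dist_lt (hf : ∀ n, Continuous (f n))
    (hae : ∀ᵐ p ∂μ.prod μ,
      Tendsto (fun n => dist (f n p.1) (f n p.2)) atTop (𝓝 (dist p.1 p.2)))
    {ε : ℝ} (hε : 0 < ε) {θ : ℝ≥0∞} (hθ : θ ≠ 0) :
    ∃ K, IsClosed K ∧ μ Kᶜ ≤ θ ∧ ∃ N, ∃ δ > 0, ∀ x ∈ K, ∀ y ∈ K, dist x y < δ →
      ∀ n ≥ N, dist (f n x) (f n y) < ε := by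
  obtain ⟨t, ht⟩ := isCompact_univ.elim_finite_subcover (fun x : X => ball x (ε / 8))
    (fun _ => isOpen_ball) fun x _ => mem_iUnion.2 ⟨x, mem_ball_self (by positivity)⟩
  set B : t → Set X := fun c => ball (c : X) (ε / 8)
  obtain ⟨δ, hδ, hlebesgue⟩ := lebesgue_number_lemma_of_metric (c := B) isCompact_univ
    (fun _ => isOpen_ball) (by simpa [B, iUnion_subtype] using ht)
  set ρ := θ / 2 / Fintype.card t
  have hρ : ρ ≠ 0 := (ENNReal.div_pos (ENNReal.half_pos hθ).ne' (ENNReal.natCast_ne_top _)).ne'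
  obtain ⟨N, hN⟩ : ∃ N, ∀ c, μ (B c) ≠ 0 →
      μ.prod μ (boundedStretchPairs f (ε / 4) N)ᶜ ≤ μ (B c) / 2 * ρ := by
    have h := tendsto_measure_compl_boundedStretchPairs μ hf hae (by positivity : 0 < ε / 4)
    refine (eventually_all (l := atTop).2 fun c => ?_).exists
    by_cases hc : μ (B c) = 0
    · exact Eventually.of_forall fun _ h => absurd hc h
    · exact ((tendsto_order.1 h).2 _ (ENNReal.mul_pos (ENNReal.half_pos hc).ne' hρ)).mono
        fun _ hN _ => hN.le
  set G := majoritySet μ B (boundedStretchPairs f (ε / 4) N)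
  have hE := (isClosed_boundedStretchPairs hf (ε / 4) N).measurableSet
  have hG : μ Gᶜ ≤ θ / 2 := (measure_compl_majoritySet_le hE hN).trans ENNReal.mul_div_le
  obtain ⟨K, hKG, hK, hGK⟩ := (measurableSet_majoritySet (fun _ => measurableSet_ball) hE
    ).exists_isClosed_sdiff_lt (measure_ne_top μ G) (ENNReal.half_pos hθ).ne'
  refine ⟨K, hK, ?_, N, δ, hδ, fun x hx y hy hxy n hn => ?_⟩
  · calc μ Kᶜ ≤ μ (Gᶜ ∪ G \ K) :=
          measure_mono fun x hx => (em' (x ∈ G)).imp_right fun hxG => ⟨hxG, hx⟩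
      _ ≤ θ / 2 + θ / 2 := (measure_union_le _ _).trans (add_le_add hG hGK.le)
      _ = θ := ENNReal.add_halves θ
  obtain ⟨c, hc⟩ := hlebesgue x (mem_univ x)
  have hxc : x ∈ B c := hc (mem_ball_self hδ)
  have hyc : y ∈ B c := hc (mem_ball'.2 hxy)
  obtain ⟨z, hzc, hxz, hyz⟩ := exists_mem_of_mem_majoritySet (hKG hx) (hKG hy) hxc hyc
  exact (dist_lt_of_mem_boundedStretchPairs hxz hyz hxc hyc hzc hn).trans_eq (by ring)

theorem exists_isClosed_measure_compl_le_forall_dist_lt (hf : ∀ n, Continuous (f n))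
    (hae : ∀ᵐ p ∂μ.prod μ,
      Tendsto (fun n => dist (f n p.1) (f n p.2)) atTop (𝓝 (dist p.1 p.2)))
    {ε : ℝ} (hε : 0 < ε) {θ : ℝ≥0∞} (hθ : θ ≠ 0) :
    ∃ K, IsClosed K ∧ μ Kᶜ ≤ θ ∧ ∃ δ > 0, ∀ x ∈ K, ∀ y ∈ K, dist x y < δ →
      ∀ n, dist (f n x) (f n y) < ε := by
  obtain ⟨K, hK, hKθ, N, δ₁, hδ₁, htail⟩ :=
    exists_isClosed_measure_compl_le_forall_ge_dist_lt μ hf hae hε hθ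
  have hhead : UniformEquicontinuous fun n : Fin N => f n :=
    uniformEquicontinuous_finite.2 fun n => CompactSpace.uniformContinuous_of_continuous (hf n)
  obtain ⟨δ₂, hδ₂, hhead⟩ := Metric.uniformEquicontinuous_iff.1 hhead ε hε
  refine ⟨K, hK, hKθ, min δ₁ δ₂, lt_min hδ₁ hδ₂, fun x hx y hy hxy n => ?_⟩
  rcases lt_or_ge n N with hn | hn
  · exact hhead x y (hxy.trans_le (min_le_right _ _)) ⟨n, hn⟩
  · exact htail x hx y hy (hxy.trans_le (min_le_left _ _)) n hn

theorem exists_isCompact_measure_compl_lt_forall_dist_lt (hf : ∀ n, Continuous (f n))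
    (hae : ∀ᵐ p ∂μ.prod μ,
      Tendsto (fun n => dist (f n p.1) (f n p.2)) atTop (𝓝 (dist p.1 p.2)))
    {θ : ℝ≥0∞} (hθ : θ ≠ 0) :
    ∃ K, IsCompact K ∧ μ Kᶜ < θ ∧ ∀ ε > 0, ∃ δ > 0, ∀ x ∈ K, ∀ y ∈ K, dist x y < δ →
      ∀ n, dist (f n x) (f n y) < ε := by
  obtain ⟨θ', hθ'pos, hθ'sum⟩ := ENNReal.exists_pos_sum_of_countable hθ ℕ
  choose K hK hKθ hKequi using fun k : ℕ => exists_isClosed_measure_compl_le_forall_dist_lt μ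
    hf hae (Nat.one_div_pos_of_nat (n := k)) (ENNReal.coe_ne_zero.2 (hθ'pos k).ne')
  refine ⟨⋂ k, K k, (isClosed_iInter hK).isCompact, ?_, fun ε hε => ?_⟩
  · calc μ (⋂ k, K k)ᶜ ≤ ∑' k, μ (K k)ᶜ := by rw [compl_iInter]; exact measure_iUnion_le _
      _ ≤ ∑' k, (θ' k : ℝ≥0∞) := ENNReal.tsum_le_tsum hKθ
      _ < θ := hθ'sum
  obtain ⟨k, hk⟩ := exists_nat_one_div_lt hε
  obtain ⟨δ, hδ, hKk⟩ := hKequi k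
  exact ⟨δ, hδ, fun x hx y hy hxy n =>
    (hKk x (mem_iInter.1 hx k) y (mem_iInter.1 hy k) hxy n).trans hk⟩

end Equicontinuity

theorem stmt13_general {X : Type*} [MetricSpace X] [CompactSpace X] [MeasurableSpace X]
    [BorelSpace X] (μ : Measure X) [IsProbabilityMeasure μ] (T : X ≃ₜ X)
    (a : ℕ → ℕ)
    (hae : ∀ᵐ p ∂(μ.prod μ), Tendsto
      (fun n => dist ((⇑T)^[a n] p.1) ((⇑T)^[a n] p.2)) atTop
      (𝓝 (dist p.1 p.2))) :
    ∀ τ > (0 : ℝ), ∃ K : Set X, IsCompact K ∧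
      μ K > ENNReal.ofReal (1 - τ) ∧ ∀ ε > (0 : ℝ), ∃ δ > (0 : ℝ),
      ∀ x ∈ K, ∀ y ∈ K, dist x y < δ →
        ∀ n : ℕ, dist ((⇑T)^[a n] x) ((⇑T)^[a n] y) < ε := by
  intro τ hτ
  obtain ⟨K, hK, hKτ, hequi⟩ := exists_isCompact_measure_compl_lt_forall_dist_lt μ
    (fun n => T.continuous.iterate (a n)) hae
    (θ := min (ENNReal.ofReal τ) 1) (lt_min (ENNReal.ofReal_pos.2 hτ) one_pos).ne'
  refine ⟨K, hK, ?_, hequi⟩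
  calc ENNReal.ofReal (1 - τ) = 1 - ENNReal.ofReal τ := by
        rw [ENNReal.ofReal_sub _ hτ.le, ENNReal.ofReal_one]
    _ ≤ 1 - min (ENNReal.ofReal τ) 1 := tsub_le_tsub_left (min_le_left _ _) 1
    _ < 1 - μ Kᶜ := ((ENNReal.cancel_of_ne ENNReal.one_ne_top).tsub_lt_tsub_iff_left_of_le
        (ENNReal.cancel_of_ne (min_lt_of_right_lt ENNReal.one_lt_top).ne) (min_le_right _ _)).2 hKτ
    _ = μ K := by rw [← prob_compl_eq_one_sub hK.isClosed.measurableSet.compl, compl_compl]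

theorem stmt13 {X : Type*} [MetricSpace X] [CompactSpace X] [MeasurableSpace X]
    [BorelSpace X] (μ : Measure X) [IsProbabilityMeasure μ] (T : X ≃ₜ X)
    (hT : MeasurePreserving T μ μ) (a : ℕ → ℕ) (ha : StrictMono a)
    (hae : ∀ᵐ p ∂(μ.prod μ), Tendsto
      (fun n => dist ((⇑T)^[a n] p.1) ((⇑T)^[a n] p.2)) atTop
      (𝓝 (dist p.1 p.2))) :
    ∀ τ > (0 : ℝ), ∃ K : Set X, IsCompact K ∧
      μ K > ENNReal.ofReal (1 - τ) ∧ ∀ ε > (0 : ℝ), ∃ δ > (0 : ℝ),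
      ∀ x ∈ K, ∀ y ∈ K, dist x y < δ →
        ∀ n : ℕ, dist ((⇑T)^[a n] x) ((⇑T)^[a n] y) < ε :=
  stmt13_general μ T a hae
end

section
/- Let A = FS{b_i} be an IP-set generated by a sequence (b_i) ⊆ ℕ, i.e. A consists of all finite sums b_{i_1} + ⋯ + b_{i_k} with i_1 < ⋯ < i_k. If a compact metric space X with homeomorphism T satisfies: {T^a : a ∈ A} is uniformly equicontinuous, then T is uniformly rigid (T^{b_i + ⋯} along suitable finite sums converges uniformly to the identity along some strictly increasing sequence). -/
/-!
By Arzelà–Ascoli, the equicontinuous family `T^[b i]` of self-maps of the compact space `X` has a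
uniformly Cauchy subsequence. If `T^[b j]` and `T^[b i]` are uniformly `ε`-close and `b i < b j`,
then, since `T^[b i]` is onto, `T^[b j - b i]` is uniformly `ε`-close to the identity. As `b` is
injective, these differences can be taken arbitrarily large, so `0` is a cluster point of
`d ↦ sup_x dist (T^[d] x) x`.
-/

open Filter Topology Function
open scoped BoundedContinuousFunction

section

variable {X : Type*} [PseudoMetricSpace X]

lemma dist_iterate_sub_self_le {f : X → X} (hf : Surjective f) {m n : ℕ} (hmn : m ≤ n) {ε : ℝ}
    (h : ∀ x, dist (f^[n] x) (f^[m] x) ≤ ε) (z : X) : dist (f^[n - m] z) z ≤ ε := by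
  obtain ⟨x, rfl⟩ := hf.iterate m z
  rw [← iterate_add_apply, Nat.sub_add_cancel hmn]
  exact h x

lemma exists_strictMono_tendsto_iSup_dist_iterate {f : X → X}
    (h : ∀ ε > 0, ∃ᶠ d in atTop, ∀ x, dist (f^[d] x) x ≤ ε) :
    ∃ n : ℕ → ℕ, StrictMono n ∧ Tendsto (fun k => ⨆ x, dist (f^[n k] x) x) atTop (𝓝 0) := by
  suffices MapClusterPt 0 atTop fun d => ⨆ x, dist (f^[d] x) x from this.tendsto_subseq
  refine Metric.nhds_basis_closedBall.mapClusterPt_iff_frequently.2 fun ε hε => ?_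
  refine (h ε hε).mono fun d hd => ?_
  rw [Metric.mem_closedBall, Real.dist_0_eq_abs,
    abs_of_nonneg (Real.iSup_nonneg fun _ => dist_nonneg)]
  exact Real.iSup_le hd hε.le

end

lemma frequently_forall_dist_iterate_le {X : Type*} [MetricSpace X] [CompactSpace X] {f : X → X}
    (hf : Continuous f) (hsurj : Surjective f) {a : ℕ → ℕ} (ha : Tendsto a atTop atTop)
    (heq : Equicontinuous fun k => f^[a k]) {ε : ℝ} (hε : 0 < ε) :
    ∃ᶠ d in atTop, ∀ x, dist (f^[d] x) x ≤ ε := by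
  let F : ℕ → X →ᵇ X := fun k => .mkOfCompact ⟨f^[a k], hf.iterate _⟩
  have hFeq : Equicontinuous ((↑) : Set.range F → X → X) := by
    convert heq.comp (Set.rangeSplitting F) with g
    exact congrArg DFunLike.coe (Set.apply_rangeSplitting F g).symm
  obtain ⟨_, _, φ, hφ, hlim⟩ :=
    (BoundedContinuousFunction.arzela_ascoli Set.univ isCompact_univ _ (by simp) hFeq).tendsto_subseq
      fun k => subset_closure (Set.mem_range_self k)
  obtain ⟨N, hN⟩ := Metric.cauchySeq_iff'.1 hlim.cauchySeq ε hε
  refine frequently_atTop.2 fun M => ?_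
  obtain ⟨n, hn, hnN⟩ :=
    ((ha.comp hφ.tendsto_atTop).eventually_ge_atTop (a (φ N) + M)).and (eventually_ge_atTop N)
      |>.exists
  rw [Function.comp_apply] at hn
  refine ⟨a (φ n) - a (φ N), by omega, dist_iterate_sub_self_le hsurj (by omega) fun x => ?_⟩
  exact (BoundedContinuousFunction.dist_coe_le_dist x).trans (hN n hnN).le

theorem stmt14 {X : Type*} [MetricSpace X] [CompactSpace X] (T : X ≃ₜ X)
    (b : ℕ → ℕ) (hb : Function.Injective b)
    (A : Set ℕ)
    (hA : A = {m : ℕ | ∃ s : Finset ℕ, s.Nonempty ∧ m = ∑ i ∈ s, b i})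
    (hec : ∀ ε > 0, ∃ δ > 0, ∀ x y : X, dist x y < δ →
      ∀ a ∈ A, dist ((⇑T)^[a] x) ((⇑T)^[a] y) < ε) :
    ∃ n : ℕ → ℕ, StrictMono n ∧
      Tendsto (fun k => ⨆ x : X, dist ((⇑T)^[n k] x) x) atTop (𝓝 0) := by
  have hbA : ∀ i, b i ∈ A := fun i => hA ▸ ⟨{i}, Finset.singleton_nonempty i, by simp⟩
  have heq : Equicontinuous fun i => (⇑T)^[b i] :=
    (Metric.uniformEquicontinuous_iff.2 fun ε hε => (hec ε hε).imp fun _ ⟨hδ, h⟩ =>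
      ⟨hδ, fun x y hxy i => h x y hxy _ (hbA i)⟩).equicontinuous
  exact exists_strictMono_tendsto_iSup_dist_iterate fun ε hε =>
    frequently_forall_dist_iterate_le T.continuous T.surjective hb.nat_tendsto_atTop heq hε
end
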